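/- arXiv:1110.4297 — 8 statements merged into one kernel-verified Lean document; each statement's English description precedes it below -/
import Mathlib

section
/- For every F ∈ 𝔽, the forms F₁(F), F₂(F), F₃(F) and hF are again elements of 𝔽, and F = hF + F₁(F) + F₂(F) − F₃(F). -/
open scoped BigOperators RealInnerProductSpace

noncomputable section

variable {V : Type*} [NormedAddCommGroup V] [InnerProductSpace ℝ V]

/-- A map `V → V → V → ℝ` linear in each of its three arguments. -/
def Trilinear (F : V → V → V → ℝ) : Prop :=
  (∀ y z, IsLinearMap ℝ fun x => F x y z) ∧
  (∀ x z, IsLinearMap ℝ fun y => F x y z) ∧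
  (∀ x y, IsLinearMap ℝ fun z => F x y z)

/-- Almost contact metric structure `(φ, ξ, η, g)` on `V` with `dim V = 2n+1`. -/
def ACM (n : ℕ) (φ : V →ₗ[ℝ] V) (ξ : V) (η : V →ₗ[ℝ] ℝ) : Prop :=
  Module.finrank ℝ V = 2 * n + 1 ∧
  (∀ x, φ (φ x) = -x + η x • ξ) ∧
  φ ξ = 0 ∧
  (∀ x, η (φ x) = 0) ∧
  ⟪ξ, ξ⟫ = 1 ∧
  (∀ x y, ⟪φ x, φ y⟫ = ⟪x, y⟫ - η x * η y)

/-- Membership in the space `𝔽` of trilinear forms with the symmetries (1). -/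
def InF (φ : V →ₗ[ℝ] V) (ξ : V) (η : V →ₗ[ℝ] ℝ) (F : V → V → V → ℝ) : Prop :=
  Trilinear F ∧
  (∀ x y z, F x y z = -F x z y) ∧
  (∀ x y z, F x y z = -F x (φ y) (φ z) + η y * F x ξ z + η z * F x y ξ)

/-- `h x = -φ²x`. -/
def hMap (φ : V →ₗ[ℝ] V) (x : V) : V := -φ (φ x)

/-- `hF(x,y,z) = F(hx,hy,hz)`. -/
def hF (φ : V →ₗ[ℝ] V) (F : V → V → V → ℝ) : V → V → V → ℝ :=
  fun x y z => F (hMap φ x) (hMap φ y) (hMap φ z)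

def F1 (ξ : V) (η : V →ₗ[ℝ] ℝ) (F : V → V → V → ℝ) : V → V → V → ℝ :=
  fun x y z => η x * F ξ y z

def F2 (ξ : V) (η : V →ₗ[ℝ] ℝ) (F : V → V → V → ℝ) : V → V → V → ℝ :=
  fun x y z => η y * F x ξ z - η z * F x ξ y

def F3 (ξ : V) (η : V →ₗ[ℝ] ℝ) (F : V → V → V → ℝ) : V → V → V → ℝ :=
  fun x y z => η x * η y * F ξ ξ z - η x * η z * F ξ ξ y

def F4 (φ : V →ₗ[ℝ] V) (ξ : V) (η : V →ₗ[ℝ] ℝ) (F : V → V → V → ℝ) : V → V → V → ℝ :=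
  fun x y z => η y * F (φ x) ξ (φ z) - η z * F (φ x) ξ (φ y)

def F5 (ξ : V) (η : V →ₗ[ℝ] ℝ) (F : V → V → V → ℝ) : V → V → V → ℝ :=
  fun x y z => η y * F z ξ x - η z * F y ξ x

def F6 (φ : V →ₗ[ℝ] V) (ξ : V) (η : V →ₗ[ℝ] ℝ) (F : V → V → V → ℝ) : V → V → V → ℝ :=
  fun x y z => η y * F (φ z) ξ (φ x) - η z * F (φ y) ξ (φ x)

/-- `f(F)(z) = Σᵢ F(eᵢ, eᵢ, z)`. -/
def fTr {ι : Type*} [Fintype ι] (e : OrthonormalBasis ι ℝ V) (F : V → V → V → ℝ) (z : V) : ℝ :=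
  ∑ i, F (e i) (e i) z

/-- `f*(F)(z) = Σᵢ F(eᵢ, φ eᵢ, z)`. -/
def fTrStar {ι : Type*} [Fintype ι] (φ : V →ₗ[ℝ] V) (e : OrthonormalBasis ι ℝ V)
    (F : V → V → V → ℝ) (z : V) : ℝ :=
  ∑ i, F (e i) (φ (e i)) z

/-- The inner product on `𝔽`: `⟨F,G⟩ = Σ_{i,j,k} F(eᵢ,eⱼ,e_k) G(eᵢ,eⱼ,e_k)`. -/
def innerF {ι : Type*} [Fintype ι] (e : OrthonormalBasis ι ℝ V) (F G : V → V → V → ℝ) : ℝ :=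
  ∑ i, ∑ j, ∑ k, F (e i) (e j) (e k) * G (e i) (e j) (e k)

def F7 (n : ℕ) {ι : Type*} [Fintype ι] (e : OrthonormalBasis ι ℝ V) (ξ : V) (η : V →ₗ[ℝ] ℝ)
    (F : V → V → V → ℝ) : V → V → V → ℝ :=
  fun x y z => (1 / (2 * (n : ℝ))) * fTr e F ξ * (η z * ⟪x, y⟫ - η y * ⟪x, z⟫)

def F8 (n : ℕ) (φ : V →ₗ[ℝ] V) {ι : Type*} [Fintype ι] (e : OrthonormalBasis ι ℝ V) (ξ : V)
    (η : V →ₗ[ℝ] ℝ) (F : V → V → V → ℝ) : V → V → V → ℝ :=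
  fun x y z => -(1 / (2 * (n : ℝ))) * fTrStar φ e F ξ * (η z * ⟪x, φ y⟫ - η y * ⟪x, φ z⟫)

def F9 (n : ℕ) (φ : V →ₗ[ℝ] V) {ι : Type*} [Fintype ι] (e : OrthonormalBasis ι ℝ V)
    (F : V → V → V → ℝ) : V → V → V → ℝ :=
  fun x y z => (1 / (2 * ((n : ℝ) - 1))) *
    (⟪hMap φ x, hMap φ y⟫ * fTr e F z - ⟪hMap φ x, hMap φ z⟫ * fTr e F y
      - ⟪x, φ y⟫ * fTr e F (φ z) + ⟪x, φ z⟫ * fTr e F (φ y))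

def F10 (φ : V →ₗ[ℝ] V) (F : V → V → V → ℝ) : V → V → V → ℝ :=
  fun x y z => (1 / 2) * (F x y z + F (φ x) (φ y) z)

def F11 (φ : V →ₗ[ℝ] V) (F : V → V → V → ℝ) : V → V → V → ℝ :=
  fun x y z => (1 / 6) * (F x y z + F y z x + F z x y
    - F (φ x) (φ y) z - F (φ y) (φ z) x - F (φ z) (φ x) y)

def F12 (φ : V →ₗ[ℝ] V) (F : V → V → V → ℝ) : V → V → V → ℝ :=
  fun x y z => (1 / 2) * (F x y z - F (φ x) (φ y) z)

/-- The action of a linear isometry `A` of `V` on trilinear forms: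
`(A·F)(x,y,z) = F(A⁻¹x, A⁻¹y, A⁻¹z)`. -/
def actA (A : V ≃ₗᵢ[ℝ] V) (F : V → V → V → ℝ) : V → V → V → ℝ :=
  fun x y z => F (A.symm x) (A.symm y) (A.symm z)

def L1 (ξ : V) (η : V →ₗ[ℝ] ℝ) (F : V → V → V → ℝ) : V → V → V → ℝ :=
  fun x y z => F x y z - 2 * F3 ξ η F x y z

def L2 (ξ : V) (η : V →ₗ[ℝ] ℝ) (F : V → V → V → ℝ) : V → V → V → ℝ :=
  fun x y z => F x y z - 2 * (F1 ξ η F x y z + F2 ξ η F x y z)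

def L3 (ξ : V) (η : V →ₗ[ℝ] ℝ) (F : V → V → V → ℝ) : V → V → V → ℝ :=
  fun x y z => F2 ξ η F x y z - F1 ξ η F x y z

def L4 (φ : V →ₗ[ℝ] V) (ξ : V) (η : V →ₗ[ℝ] ℝ) (F : V → V → V → ℝ) : V → V → V → ℝ :=
  fun x y z => -F4 φ ξ η F x y z

def L5 (ξ : V) (η : V →ₗ[ℝ] ℝ) (F : V → V → V → ℝ) : V → V → V → ℝ :=
  fun x y z => -F5 ξ η F x y z

def L6 (n : ℕ) {ι : Type*} [Fintype ι] (e : OrthonormalBasis ι ℝ V) (ξ : V) (η : V →ₗ[ℝ] ℝ)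
    (F : V → V → V → ℝ) : V → V → V → ℝ :=
  fun x y z => F x y z - 2 * F7 n e ξ η F x y z

def L7 (n : ℕ) (φ : V →ₗ[ℝ] V) {ι : Type*} [Fintype ι] (e : OrthonormalBasis ι ℝ V) (ξ : V)
    (η : V →ₗ[ℝ] ℝ) (F : V → V → V → ℝ) : V → V → V → ℝ :=
  fun x y z => F x y z - 2 * F8 n φ e ξ η F x y z

/-- The subspace `𝔽₁ = {F ∈ 𝔽 : F = F₃(F)}`. -/
def MemF1sub (φ : V →ₗ[ℝ] V) (ξ : V) (η : V →ₗ[ℝ] ℝ) (F : V → V → V → ℝ) : Prop :=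
  InF φ ξ η F ∧ F = F3 ξ η F

/-- The subspace `v𝔽 = {F ∈ 𝔽 : hF = 0, ω(F) = 0}`. -/
def MemVF (φ : V →ₗ[ℝ] V) (ξ : V) (η : V →ₗ[ℝ] ℝ) (F : V → V → V → ℝ) : Prop :=
  InF φ ξ η F ∧ hF φ F = 0 ∧ ∀ z, F ξ ξ z = 0

/-- The subspace `h𝔽 = {F ∈ 𝔽 : F₁(F) = F₂(F) = 0}`. -/
def MemHF (φ : V →ₗ[ℝ] V) (ξ : V) (η : V →ₗ[ℝ] ℝ) (F : V → V → V → ℝ) : Prop :=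
  InF φ ξ η F ∧ F1 ξ η F = 0 ∧ F2 ξ η F = 0

/-- The subspace `(v𝔽)′ = {F ∈ 𝔽 : hF = 0, F(ξ,·,·) = 0}`. -/
def MemVF' (φ : V →ₗ[ℝ] V) (ξ : V) (η : V →ₗ[ℝ] ℝ) (F : V → V → V → ℝ) : Prop :=
  InF φ ξ η F ∧ hF φ F = 0 ∧ ∀ y z, F ξ y z = 0

/-- The subspace `𝔽₈ = {F ∈ 𝔽 : hF = 0, F(·,·,ξ) = 0}`. -/
def MemF8sub (φ : V →ₗ[ℝ] V) (ξ : V) (η : V →ₗ[ℝ] ℝ) (F : V → V → V → ℝ) : Prop :=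
  InF φ ξ η F ∧ hF φ F = 0 ∧ ∀ x y, F x y ξ = 0

/-- The subspace `𝒩 = {F ∈ (v𝔽)′ : F = F₄(F)}`. -/
def MemN (φ : V →ₗ[ℝ] V) (ξ : V) (η : V →ₗ[ℝ] ℝ) (F : V → V → V → ℝ) : Prop :=
  MemVF' φ ξ η F ∧ F = F4 φ ξ η F

/-- The subspace `𝒩̃ = {F ∈ (v𝔽)′ : F = -F₄(F)}`. -/
def MemNt (φ : V →ₗ[ℝ] V) (ξ : V) (η : V →ₗ[ℝ] ℝ) (F : V → V → V → ℝ) : Prop :=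
  MemVF' φ ξ η F ∧ F = -F4 φ ξ η F

/-- The subspace `𝒬𝒮𝔽 = {F ∈ (v𝔽)′ : F = F₄(F) = F₅(F)}`. -/
def MemQS (φ : V →ₗ[ℝ] V) (ξ : V) (η : V →ₗ[ℝ] ℝ) (F : V → V → V → ℝ) : Prop :=
  MemVF' φ ξ η F ∧ F = F4 φ ξ η F ∧ F = F5 ξ η F

/-- The subspace `𝒬𝒦𝔽 = {F ∈ (v𝔽)′ : F = F₄(F) = -F₅(F)}`. -/
def MemQK (φ : V →ₗ[ℝ] V) (ξ : V) (η : V →ₗ[ℝ] ℝ) (F : V → V → V → ℝ) : Prop :=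
  MemVF' φ ξ η F ∧ F = F4 φ ξ η F ∧ F = -F5 ξ η F

/-- The subspace `𝔽₆ = {F ∈ (v𝔽)′ : F = -F₄(F) = F₅(F)}`. -/
def MemF6sub (φ : V →ₗ[ℝ] V) (ξ : V) (η : V →ₗ[ℝ] ℝ) (F : V → V → V → ℝ) : Prop :=
  MemVF' φ ξ η F ∧ F = -F4 φ ξ η F ∧ F = F5 ξ η F

/-- The subspace `𝔽₇ = {F ∈ (v𝔽)′ : F = -F₄(F) = -F₅(F)}`. -/
def MemF7sub (φ : V →ₗ[ℝ] V) (ξ : V) (η : V →ₗ[ℝ] ℝ) (F : V → V → V → ℝ) : Prop :=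
  MemVF' φ ξ η F ∧ F = -F4 φ ξ η F ∧ F = -F5 ξ η F

/-- The subspace `𝔽₂ = {F ∈ 𝔽 : F = F₇(F)}`. -/
def MemF2sub (n : ℕ) {ι : Type*} [Fintype ι] (e : OrthonormalBasis ι ℝ V) (φ : V →ₗ[ℝ] V)
    (ξ : V) (η : V →ₗ[ℝ] ℝ) (F : V → V → V → ℝ) : Prop :=
  InF φ ξ η F ∧ F = F7 n e ξ η F

/-- The subspace `𝔽₃ = {F ∈ 𝔽 : F = F₈(F)}`. -/
def MemF3sub (n : ℕ) {ι : Type*} [Fintype ι] (e : OrthonormalBasis ι ℝ V) (φ : V →ₗ[ℝ] V)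
    (ξ : V) (η : V →ₗ[ℝ] ℝ) (F : V → V → V → ℝ) : Prop :=
  InF φ ξ η F ∧ F = F8 n φ e ξ η F

/-- The subspace `𝔽₄ = {F ∈ 𝔽 : F = F₄(F) = F₅(F), f(F)(ξ) = 0}`. -/
def MemF4sub (n : ℕ) {ι : Type*} [Fintype ι] (e : OrthonormalBasis ι ℝ V) (φ : V →ₗ[ℝ] V)
    (ξ : V) (η : V →ₗ[ℝ] ℝ) (F : V → V → V → ℝ) : Prop :=
  InF φ ξ η F ∧ F = F4 φ ξ η F ∧ F = F5 ξ η F ∧ fTr e F ξ = 0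

/-- The subspace `𝔽₅ = {F ∈ 𝔽 : F = F₄(F) = -F₅(F), f*(F)(ξ) = 0}`. -/
def MemF5sub (n : ℕ) {ι : Type*} [Fintype ι] (e : OrthonormalBasis ι ℝ V) (φ : V →ₗ[ℝ] V)
    (ξ : V) (η : V →ₗ[ℝ] ℝ) (F : V → V → V → ℝ) : Prop :=
  InF φ ξ η F ∧ F = F4 φ ξ η F ∧ F = -F5 ξ η F ∧ fTrStar φ e F ξ = 0

/-- The subspace `𝔽₄ = {F ∈ (v𝔽)′ : F = F₄(F) = F₅(F), f(F)(ξ) = 0}`. -/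
def MemF4sub' (n : ℕ) {ι : Type*} [Fintype ι] (e : OrthonormalBasis ι ℝ V) (φ : V →ₗ[ℝ] V)
    (ξ : V) (η : V →ₗ[ℝ] ℝ) (F : V → V → V → ℝ) : Prop :=
  MemVF' φ ξ η F ∧ F = F4 φ ξ η F ∧ F = F5 ξ η F ∧ fTr e F ξ = 0

/-- The subspace `𝔽₅ = {F ∈ (v𝔽)′ : F = F₄(F) = -F₅(F), f*(F)(ξ) = 0}`. -/
def MemF5sub' (n : ℕ) {ι : Type*} [Fintype ι] (e : OrthonormalBasis ι ℝ V) (φ : V →ₗ[ℝ] V)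
    (ξ : V) (η : V →ₗ[ℝ] ℝ) (F : V → V → V → ℝ) : Prop :=
  MemVF' φ ξ η F ∧ F = F4 φ ξ η F ∧ F = -F5 ξ η F ∧ fTrStar φ e F ξ = 0

/-- The subspace `𝔽₉ = {F ∈ 𝔽 : F = hF = F₉(F)}`. -/
def MemF9sub (n : ℕ) {ι : Type*} [Fintype ι] (e : OrthonormalBasis ι ℝ V) (φ : V →ₗ[ℝ] V)
    (ξ : V) (η : V →ₗ[ℝ] ℝ) (F : V → V → V → ℝ) : Prop :=
  InF φ ξ η F ∧ F = hF φ F ∧ F = F9 n φ e F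

/-- The subspace `𝔽₁₀ = {F ∈ 𝔽 : F = hF = F₁₀(F) - F₉(F)}`. -/
def MemF10sub (n : ℕ) {ι : Type*} [Fintype ι] (e : OrthonormalBasis ι ℝ V) (φ : V →ₗ[ℝ] V)
    (ξ : V) (η : V →ₗ[ℝ] ℝ) (F : V → V → V → ℝ) : Prop :=
  InF φ ξ η F ∧ F = hF φ F ∧ F = F10 φ F - F9 n φ e F

/-- The subspace `𝔽₁₁ = {F ∈ 𝔽 : F = hF = F₁₁(F)}`. -/
def MemF11sub (φ : V →ₗ[ℝ] V) (ξ : V) (η : V →ₗ[ℝ] ℝ) (F : V → V → V → ℝ) : Prop :=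
  InF φ ξ η F ∧ F = hF φ F ∧ F = F11 φ F

/-- The subspace `𝔽₁₂ = {F ∈ 𝔽 : F = hF = F₁₂(F) - F₁₁(F)}`. -/
def MemF12sub (φ : V →ₗ[ℝ] V) (ξ : V) (η : V →ₗ[ℝ] ℝ) (F : V → V → V → ℝ) : Prop :=
  InF φ ξ η F ∧ F = hF φ F ∧ F = F12 φ F - F11 φ F

theorem stmt0 (n : ℕ) (φ : V →ₗ[ℝ] V) (ξ : V) (η : V →ₗ[ℝ] ℝ)
    (hacm : ACM n φ ξ η) (F : V → V → V → ℝ) (hFmem : InF φ ξ η F) :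
    InF φ ξ η (F1 ξ η F) ∧ InF φ ξ η (F2 ξ η F) ∧ InF φ ξ η (F3 ξ η F) ∧
      InF φ ξ η (hF φ F) ∧
      ∀ x y z, F x y z =
        hF φ F x y z + F1 ξ η F x y z + F2 ξ η F x y z - F3 ξ η F x y z := by
  obtain ⟨htri, hanti, hphiF⟩ := hFmem
  obtain ⟨hdim, hphisq, hphixi, hetaphi, hxixi, hinner⟩ := hacm
  have hxine : ξ ≠ 0 := by
    intro h
    rw [h] at hxixi
    simp at hxixi
  have hetaxi : η ξ = 1 := by
    have h := hphisq ξ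
    rw [hphixi, map_zero] at h
    have h2 : (η ξ - 1) • ξ = 0 := by
      rw [sub_smul, one_smul, sub_eq_zero]
      linear_combination (norm := module) -h
    rcases smul_eq_zero.mp h2 with h3 | h3
    · linarith [sub_eq_zero.mp (by exact_mod_cast h3 : η ξ - 1 = 0)]
    · exact absurd h3 hxine
  have hMapeq : ∀ x : V, hMap φ x = x - η x • ξ := by
    intro x
    simp only [hMap, hphisq x]
    module
  have hMapxi : hMap φ ξ = 0 := by
    rw [hMapeq, hetaxi, one_smul, sub_self]
  have hetah : ∀ x : V, η (hMap φ x) = 0 := by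
    intro x
    rw [hMapeq]
    simp [hetaxi]
  have hphih : ∀ x : V, φ (hMap φ x) = φ x := by
    intro x
    rw [hMapeq]
    simp [hphixi]
  have hFxi : ∀ x, F x ξ ξ = 0 := by
    intro x
    have := hanti x ξ ξ
    linarith
  -- expansion lemmas
  have e1 : ∀ x y z : V, F (x - η x • ξ) y z = F x y z - η x * F ξ y z := by
    intro x y z
    have h := htri.1 y z
    rw [h.map_sub, h.map_smul, smul_eq_mul]
  have e2 : ∀ x y z : V, F x (y - η y • ξ) z = F x y z - η y * F x ξ z := by
    intro x y z
    have h := htri.2.1 x z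
    rw [h.map_sub, h.map_smul, smul_eq_mul]
  have e3 : ∀ x y z : V, F x y (z - η z • ξ) = F x y z - η z * F x y ξ := by
    intro x y z
    have h := htri.2.2 x y
    rw [h.map_sub, h.map_smul, smul_eq_mul]
  have hexp : ∀ x y z, hF φ F x y z =
      F x y z - F1 ξ η F x y z - F2 ξ η F x y z + F3 ξ η F x y z := by
    intro x y z
    simp only [hF, hMapeq, F1, F2, F3]
    rw [e1, e2, e2, e3, e3, e3, e3, hanti x y ξ, hanti ξ y ξ, hFxi x, hFxi ξ]
    ring
  -- Trilinearity helpers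
  have linF1 : Trilinear (F1 ξ η F) := by
    refine ⟨fun y z => ⟨?_, ?_⟩, fun x z => ⟨?_, ?_⟩, fun x y => ⟨?_, ?_⟩⟩
    · intro a b; simp only [F1, map_add, add_mul]
    · intro c a; simp only [F1, map_smul, smul_eq_mul]; ring
    · intro a b; simp only [F1, (htri.2.1 ξ z).map_add, mul_add]
    · intro c a
      simp only [F1, (htri.2.1 ξ z).map_smul, smul_eq_mul]; ring
    · intro a b; simp only [F1, (htri.2.2 ξ y).map_add, mul_add]
    · intro c a
      simp only [F1, (htri.2.2 ξ y).map_smul, smul_eq_mul]; ring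
  have linF2 : Trilinear (F2 ξ η F) := by
    refine ⟨fun y z => ⟨?_, ?_⟩, fun x z => ⟨?_, ?_⟩, fun x y => ⟨?_, ?_⟩⟩
    · intro a b
      simp only [F2, (htri.1 ξ z).map_add, (htri.1 ξ y).map_add]; ring
    · intro c a
      simp only [F2, (htri.1 ξ z).map_smul, (htri.1 ξ y).map_smul, smul_eq_mul]; ring
    · intro a b
      simp only [F2, map_add, (htri.2.2 x ξ).map_add]; ring
    · intro c a
      simp only [F2, map_smul, (htri.2.2 x ξ).map_smul, smul_eq_mul]; ring
    · intro a b
      simp only [F2, map_add, (htri.2.2 x ξ).map_add]; ring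
    · intro c a
      simp only [F2, map_smul, (htri.2.2 x ξ).map_smul, smul_eq_mul]; ring
  have linF3 : Trilinear (F3 ξ η F) := by
    refine ⟨fun y z => ⟨?_, ?_⟩, fun x z => ⟨?_, ?_⟩, fun x y => ⟨?_, ?_⟩⟩
    · intro a b; simp only [F3, map_add]; ring
    · intro c a; simp only [F3, map_smul, smul_eq_mul]; ring
    · intro a b
      simp only [F3, map_add, (htri.2.2 ξ ξ).map_add]; ring
    · intro c a
      simp only [F3, map_smul, (htri.2.2 ξ ξ).map_smul, smul_eq_mul]; ring
    · intro a b
      simp only [F3, map_add, (htri.2.2 ξ ξ).map_add]; ring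
    · intro c a
      simp only [F3, map_smul, (htri.2.2 ξ ξ).map_smul, smul_eq_mul]; ring
  have hMaplin : IsLinearMap ℝ (hMap φ) :=
    ⟨fun a b => by simp [hMap, map_add]; abel, fun c a => by simp [hMap, map_smul]⟩
  have linhF : Trilinear (hF φ F) := by
    refine ⟨fun y z => ⟨?_, ?_⟩, fun x z => ⟨?_, ?_⟩, fun x y => ⟨?_, ?_⟩⟩
    · intro a b
      simp only [hF, hMaplin.map_add, (htri.1 _ _).map_add]
    · intro c a
      simp only [hF, hMaplin.map_smul, (htri.1 _ _).map_smul]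
    · intro a b
      simp only [hF, hMaplin.map_add, (htri.2.1 _ _).map_add]
    · intro c a
      simp only [hF, hMaplin.map_smul, (htri.2.1 _ _).map_smul]
    · intro a b
      simp only [hF, hMaplin.map_add, (htri.2.2 _ _).map_add]
    · intro c a
      simp only [hF, hMaplin.map_smul, (htri.2.2 _ _).map_smul]
  refine ⟨⟨linF1, ?_, ?_⟩, ⟨linF2, ?_, ?_⟩, ⟨linF3, ?_, ?_⟩, ⟨linhF, ?_, ?_⟩, ?_⟩
  · intro x y z
    simp only [F1]
    rw [hanti ξ y z]; ring
  · intro x y z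
    simp only [F1]
    rw [hphiF ξ y z]; ring
  · intro x y z
    simp only [F2]
    ring
  · intro x y z
    simp only [F2, hetaphi, hetaxi, hFxi]
    ring
  · intro x y z
    simp only [F3]
    ring
  · intro x y z
    have hFzzz : F ξ ξ ξ = 0 := hFxi ξ
    simp only [F3, hetaphi, hetaxi, hFzzz]
    ring
  · intro x y z
    simp only [hF]
    rw [hanti]
  · intro x y z
    have h0 : ∀ w u : V, F w (hMap φ ξ) u = 0 := by
      intro w u
      rw [hMapxi, (htri.2.1 w u).map_zero]
    have h0' : ∀ w u : V, F w u (hMap φ ξ) = 0 := by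
      intro w u
      rw [hMapxi, (htri.2.2 w u).map_zero]
    simp only [hF, h0, h0', mul_zero, add_zero]
    rw [hphiF (hMap φ x) (hMap φ y) (hMap φ z), hetah, hetah, hphih, hphih,
      hMapeq (φ y), hMapeq (φ z), hetaphi, hetaphi, zero_smul, sub_zero, sub_zero]
    ring
  · intro x y z
    have := hexp x y z
    linarith
end
end

section
/- For every F ∈ 𝔽, the forms F₄(F), F₅(F), F₆(F), F₇(F) and F₈(F) are elements of 𝔽. -/
open scoped BigOperators RealInnerProductSpace

noncomputable section

variable {V : Type*} [NormedAddCommGroup V] [InnerProductSpace ℝ V]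

/-!
Each of `F₄(F)`, …, `F₈(F)` has the shape `η(y) B(x, z) - η(z) B(x, y)` for a bilinear form `B`
(built from `F(·, ξ, ·)` and `φ`, or a multiple of `⟨x, z⟩` or of `⟨x, φz⟩`). Such a form is skew in
`(y, z)`; it vanishes when `y, z ∈ im φ` because `η ∘ φ = 0`, and inserting `ξ` in the second or
third slot reproduces it up to the factor `η(ξ) = 1`, which is exactly the defining identity of `𝔽`.
-/

def etaWedge (η : V →ₗ[ℝ] ℝ) (B : V →ₗ[ℝ] V →ₗ[ℝ] ℝ) : V → V → V → ℝ :=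
  fun x y z => η y * B x z - η z * B x y

theorem ACM.eta_self {n : ℕ} {φ : V →ₗ[ℝ] V} {ξ : V} {η : V →ₗ[ℝ] ℝ} (h : ACM n φ ξ η) :
    η ξ = 1 := by
  obtain ⟨-, hφφ, hφξ, -, hξξ, -⟩ := h
  have h0 : (0 : V) = -ξ + η ξ • ξ := by rw [← hφφ, hφξ, map_zero]
  have := congrArg (fun v => ⟪ξ, v⟫) h0
  simp only [inner_zero_right, inner_add_right, inner_neg_right, real_inner_smul_right, hξξ] at this
  linarith

def Trilinear.toLinearMap {F : V → V → V → ℝ} (hF : Trilinear F) :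
    V →ₗ[ℝ] V →ₗ[ℝ] V →ₗ[ℝ] ℝ where
  toFun x := LinearMap.mk₂ ℝ (F x)
    (fun y y' z => (hF.2.1 x z).map_add y y') (fun c y z => (hF.2.1 x z).map_smul c y)
    (fun y z z' => (hF.2.2 x y).map_add z z') (fun c y z => (hF.2.2 x y).map_smul c z)
  map_add' x x' := by ext y z; exact (hF.1 y z).map_add x x'
  map_smul' c x := by ext y z; exact (hF.1 y z).map_smul c x

theorem trilinear_etaWedge (η : V →ₗ[ℝ] ℝ) (B : V →ₗ[ℝ] V →ₗ[ℝ] ℝ) :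
    Trilinear (etaWedge η B) := by
  refine ⟨fun y z => ⟨?_, ?_⟩, fun x z => ⟨?_, ?_⟩, fun x y => ⟨?_, ?_⟩⟩ <;>
    intros <;> simp only [etaWedge, map_add, map_smul, LinearMap.add_apply,
      LinearMap.smul_apply, smul_eq_mul] <;> ring

theorem inF_etaWedge {φ : V →ₗ[ℝ] V} {ξ : V} {η : V →ₗ[ℝ] ℝ} (hηφ : ∀ x, η (φ x) = 0)
    (hηξ : η ξ = 1) (B : V →ₗ[ℝ] V →ₗ[ℝ] ℝ) : InF φ ξ η (etaWedge η B) := by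
  refine ⟨trilinear_etaWedge η B, fun x y z => ?_, fun x y z => ?_⟩
  · simp only [etaWedge]; ring
  · simp only [etaWedge, hηφ, hηξ]; ring

section

variable {φ : V →ₗ[ℝ] V} {ξ : V} {η : V →ₗ[ℝ] ℝ} {F : V → V → V → ℝ}

theorem F4_eq_etaWedge (hF : Trilinear F) :
    F4 φ ξ η F = etaWedge η ((hF.toLinearMap.flip ξ).compl₁₂ φ φ) :=
  rfl

theorem F5_eq_etaWedge (hF : Trilinear F) :
    F5 ξ η F = etaWedge η (hF.toLinearMap.flip ξ).flip :=
  rfl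

theorem F6_eq_etaWedge (hF : Trilinear F) :
    F6 φ ξ η F = etaWedge η ((hF.toLinearMap.flip ξ).compl₁₂ φ φ).flip :=
  rfl

theorem F7_eq_etaWedge (n : ℕ) {ι : Type*} [Fintype ι] (e : OrthonormalBasis ι ℝ V) :
    F7 n e ξ η F = etaWedge η (-((1 / (2 * (n : ℝ))) * fTr e F ξ) • innerₗ V) := by
  ext x y z
  simp only [F7, etaWedge, LinearMap.smul_apply, innerₗ_apply_apply, smul_eq_mul]
  ring

theorem F8_eq_etaWedge (n : ℕ) {ι : Type*} [Fintype ι] (e : OrthonormalBasis ι ℝ V) :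
    F8 n φ e ξ η F =
      etaWedge η (((1 / (2 * (n : ℝ))) * fTrStar φ e F ξ) • (innerₗ V).compl₂ φ) := by
  ext x y z
  simp only [F8, etaWedge, LinearMap.smul_apply, LinearMap.compl₂_apply, innerₗ_apply_apply,
    smul_eq_mul]
  ring

end

theorem stmt1_general (n : ℕ) (φ : V →ₗ[ℝ] V) (ξ : V) (η : V →ₗ[ℝ] ℝ)
    (hacm : ACM n φ ξ η) (e : OrthonormalBasis (Fin (2 * n + 1)) ℝ V)
    (F : V → V → V → ℝ) (hFmem : InF φ ξ η F) :
    InF φ ξ η (F4 φ ξ η F) ∧ InF φ ξ η (F5 ξ η F) ∧ InF φ ξ η (F6 φ ξ η F) ∧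
      InF φ ξ η (F7 n e ξ η F) ∧ InF φ ξ η (F8 n φ e ξ η F) := by
  have hηφ : ∀ x, η (φ x) = 0 := hacm.2.2.2.1
  have hwedge := inF_etaWedge hηφ hacm.eta_self
  obtain ⟨hF, -, -⟩ := hFmem
  rw [F4_eq_etaWedge hF, F5_eq_etaWedge hF, F6_eq_etaWedge hF, F7_eq_etaWedge, F8_eq_etaWedge]
  exact ⟨hwedge _, hwedge _, hwedge _, hwedge _, hwedge _⟩

theorem stmt1 (n : ℕ) (φ : V →ₗ[ℝ] V) (ξ : V) (η : V →ₗ[ℝ] ℝ)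
    (hacm : ACM n φ ξ η) (hn : 1 ≤ n) (e : OrthonormalBasis (Fin (2 * n + 1)) ℝ V)
    (F : V → V → V → ℝ) (hFmem : InF φ ξ η F) :
    InF φ ξ η (F4 φ ξ η F) ∧ InF φ ξ η (F5 ξ η F) ∧ InF φ ξ η (F6 φ ξ η F) ∧
      InF φ ξ η (F7 n e ξ η F) ∧ InF φ ξ η (F8 n φ e ξ η F) :=
  stmt1_general n φ ξ η hacm e F hFmem
end
end

section
/- For every F ∈ 𝔽, writing F_{ij}(F) = F_i(F_j(F)), the following relations hold: F₁₁(F) = F₁(F), F₁₂(F) = F₃(F), F₁₃(F) = F₃(F), F₁₄(F) = 0, F₁₅(F) = 0, F₂₁(F) = F₃(F), F₂₂(F) = F₂(F), F₂₃(F) = F₃(F), F₂₄(F) = F₄(F), F₂₅(F) = F₅(F), F₃₁(F) = F₃(F), F₃₂(F) = F₃(F), F₃₃(F) = F₃(F), F₃₄(F) = 0, F₃₅(F) = 0. -/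
open scoped BigOperators RealInnerProductSpace

noncomputable section

variable {V : Type*} [NormedAddCommGroup V] [InnerProductSpace ℝ V]

theorem stmt2 (n : ℕ) (φ : V →ₗ[ℝ] V) (ξ : V) (η : V →ₗ[ℝ] ℝ)
    (hacm : ACM n φ ξ η) (hn : 1 ≤ n)
    (F : V → V → V → ℝ) (hFmem : InF φ ξ η F) :
    F1 ξ η (F1 ξ η F) = F1 ξ η F ∧
    F1 ξ η (F2 ξ η F) = F3 ξ η F ∧
    F1 ξ η (F3 ξ η F) = F3 ξ η F ∧
    F1 ξ η (F4 φ ξ η F) = 0 ∧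
    F1 ξ η (F5 ξ η F) = 0 ∧
    F2 ξ η (F1 ξ η F) = F3 ξ η F ∧
    F2 ξ η (F2 ξ η F) = F2 ξ η F ∧
    F2 ξ η (F3 ξ η F) = F3 ξ η F ∧
    F2 ξ η (F4 φ ξ η F) = F4 φ ξ η F ∧
    F2 ξ η (F5 ξ η F) = F5 ξ η F ∧
    F3 ξ η (F1 ξ η F) = F3 ξ η F ∧
    F3 ξ η (F2 ξ η F) = F3 ξ η F ∧
    F3 ξ η (F3 ξ η F) = F3 ξ η F ∧
    F3 ξ η (F4 φ ξ η F) = 0 ∧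
    F3 ξ η (F5 ξ η F) = 0 := by
  obtain ⟨hdim, hphi2, hphixi, hetaphi, hxixi, hmetric⟩ := hacm
  obtain ⟨⟨hl1, hl2, hl3⟩, hanti, hrel⟩ := hFmem
  have hxine : ξ ≠ 0 := by
    intro h; rw [h, inner_zero_left] at hxixi; norm_num at hxixi
  have hexi : η ξ = 1 := by
    have h0 := hphi2 ξ
    rw [hphixi, map_zero] at h0
    have h1 : (η ξ - 1) • ξ = 0 := by
      rw [sub_smul, one_smul]
      rw [eq_comm, neg_add_eq_zero] at h0
      rw [← h0, sub_self]
    rcases smul_eq_zero.mp h1 with h | h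
    · linarith
    · exact absurd h hxine
  have hF0l : ∀ y z, F 0 y z = 0 := fun y z => (hl1 y z).map_zero
  have hF0r : ∀ x y, F x y 0 = 0 := fun x y => (hl3 x y).map_zero
  have hFxx : ∀ x w, F x w w = 0 := fun x w => by have := hanti x w w; linarith
  refine ⟨?_, ?_, ?_, ?_, ?_, ?_, ?_, ?_, ?_, ?_, ?_, ?_, ?_, ?_, ?_⟩ <;>
    funext x y z <;>
    simp only [F1, F2, F3, F4, F5, Pi.zero_apply, hexi, hphixi, hF0l, hF0r, hFxx,
      map_zero] <;>
    ring
end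
end

section
/- For every F ∈ 𝔽, writing F_{ij}(F) = F_i(F_j(F)), the following relations hold: F₄₁(F) = 0, F₄₂(F) = F₄(F), F₄₃(F) = 0, F₄₄(F) = F₂(F) − F₃(F), F₄₅(F) = F₆(F), F₅₁(F) = 0, F₅₂(F) = F₅(F), F₅₃(F) = 0, F₅₄(F) = F₆(F), F₅₅(F) = F₂(F) − F₃(F). -/
open scoped BigOperators RealInnerProductSpace

noncomputable section

variable {V : Type*} [NormedAddCommGroup V] [InnerProductSpace ℝ V]

theorem stmt3 (n : ℕ) (φ : V →ₗ[ℝ] V) (ξ : V) (η : V →ₗ[ℝ] ℝ)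
    (hacm : ACM n φ ξ η) (hn : 1 ≤ n)
    (F : V → V → V → ℝ) (hFmem : InF φ ξ η F) :
    F4 φ ξ η (F1 ξ η F) = 0 ∧
    F4 φ ξ η (F2 ξ η F) = F4 φ ξ η F ∧
    F4 φ ξ η (F3 ξ η F) = 0 ∧
    F4 φ ξ η (F4 φ ξ η F) = F2 ξ η F - F3 ξ η F ∧
    F4 φ ξ η (F5 ξ η F) = F6 φ ξ η F ∧
    F5 ξ η (F1 ξ η F) = 0 ∧
    F5 ξ η (F2 ξ η F) = F5 ξ η F ∧
    F5 ξ η (F3 ξ η F) = 0 ∧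
    F5 ξ η (F4 φ ξ η F) = F6 φ ξ η F ∧
    F5 ξ η (F5 ξ η F) = F2 ξ η F - F3 ξ η F := by

  obtain ⟨⟨hA, hB, hC⟩, halt, _⟩ := hFmem
  obtain ⟨_, h2, h3, h4, h5, _⟩ := hacm
  have hξne : ξ ≠ 0 := by
    intro h; rw [h] at h5; simp at h5
  have hηξ : η ξ = 1 := by
    have := h2 ξ
    rw [h3] at this
    simp only [map_zero] at this
    have h' : (η ξ - 1) • ξ = 0 := by
      rw [sub_smul, one_smul, sub_eq_zero]
      have h'' : -ξ + η ξ • ξ = 0 := this.symm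
      rw [neg_add_eq_zero] at h''
      exact h''.symm
    rcases smul_eq_zero.mp h' with h'' | h''
    · linarith [sub_eq_zero.mp h'']
    · exact absurd h'' hξne
  have hz3 : ∀ x y, F x y 0 = 0 := fun x y => (hC x y).map_zero
  have hFξξ : ∀ x, F x ξ ξ = 0 := by
    intro x; have := halt x ξ ξ; linarith
  have hexp : ∀ x z, F (φ (φ x)) ξ (φ (φ z)) = F x ξ z - η x * F ξ ξ z := by
    intro x z
    rw [h2 x, h2 z]
    have e1 : ∀ w, F (-x + η x • ξ) ξ w = -F x ξ w + η x * F ξ ξ w := by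
      intro w
      rw [(hA ξ w).map_add, (hA ξ w).map_smul, (hA ξ w).map_neg]
      simp only [smul_eq_mul]; try ring
    rw [e1, (hC _ ξ).map_add, (hC _ ξ).map_smul, (hC _ ξ).map_neg,
        (hC ξ ξ).map_add, (hC ξ ξ).map_smul, (hC ξ ξ).map_neg, hFξξ]
    have hh : ∀ w, F w ξ ξ = 0 := hFξξ
    have := halt x ξ x
    simp only [smul_eq_mul, hFξξ]
    ring
  refine ⟨?_, ?_, ?_, ?_, ?_, ?_, ?_, ?_, ?_, ?_⟩ <;>
    funext x y z <;>
    simp only [F1, F2, F3, F4, F5, F6, hηξ, h4, h3, hz3, hFξξ, hexp,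
      Pi.zero_apply, Pi.sub_apply, one_mul, mul_zero, zero_mul] <;>
    ring
end
end

section
/- For every F ∈ 𝔽 the following trace identities hold: f(F₁(F)) = ω(F), f*(F₁(F)) = 0, ω(F₁(F)) = ω(F); f(F₂(F)) = ω(F) + f(F)(ξ)·η, f*(F₂(F)) = f*(F)(ξ)·η, ω(F₂(F)) = ω(F); f(F₃(F)) = ω(F), f*(F₃(F)) = 0, ω(F₃(F)) = ω(F); f(F₄(F)) = f(F)(ξ)·η, f*(F₄(F)) = f*(F)(ξ)·η, ω(F₄(F)) = 0. -/
open scoped BigOperators RealInnerProductSpace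

noncomputable section

variable {V : Type*} [NormedAddCommGroup V] [InnerProductSpace ℝ V]

theorem stmt5 (n : ℕ) (φ : V →ₗ[ℝ] V) (ξ : V) (η : V →ₗ[ℝ] ℝ)
    (hacm : ACM n φ ξ η) (hn : 1 ≤ n) (e : OrthonormalBasis (Fin (2 * n + 1)) ℝ V)
    (F : V → V → V → ℝ) (hFmem : InF φ ξ η F) :
    (∀ z, fTr e (F1 ξ η F) z = F ξ ξ z) ∧
    (∀ z, fTrStar φ e (F1 ξ η F) z = 0) ∧
    (∀ z, F1 ξ η F ξ ξ z = F ξ ξ z) ∧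
    (∀ z, fTr e (F2 ξ η F) z = F ξ ξ z + fTr e F ξ * η z) ∧
    (∀ z, fTrStar φ e (F2 ξ η F) z = fTrStar φ e F ξ * η z) ∧
    (∀ z, F2 ξ η F ξ ξ z = F ξ ξ z) ∧
    (∀ z, fTr e (F3 ξ η F) z = F ξ ξ z) ∧
    (∀ z, fTrStar φ e (F3 ξ η F) z = 0) ∧
    (∀ z, F3 ξ η F ξ ξ z = F ξ ξ z) ∧
    (∀ z, fTr e (F4 φ ξ η F) z = fTr e F ξ * η z) ∧
    (∀ z, fTrStar φ e (F4 φ ξ η F) z = fTrStar φ e F ξ * η z) ∧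
    (∀ z, F4 φ ξ η F ξ ξ z = 0) := by
  obtain ⟨hTri, hA, _hB⟩ := hFmem
  obtain ⟨_hdim, hφ2, hφξ, hηφ, hξξ, hcomp⟩ := hacm
  have hξne : ξ ≠ 0 := by
    intro h; rw [h, inner_zero_left] at hξξ; norm_num at hξξ
  have hηξ : η ξ = 1 := by
    have h1 : φ (φ ξ) = -ξ + η ξ • ξ := hφ2 ξ
    rw [hφξ, map_zero] at h1
    have h1' : η ξ • ξ = ξ := by
      have := h1.symm
      rw [neg_add_eq_zero] at this
      exact this.symm
    have h2 : (η ξ - 1) • ξ = 0 := by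
      rw [sub_smul, one_smul, h1', sub_self]
    rcases smul_eq_zero.mp h2 with h | h
    · linarith [sub_eq_zero.mp (by linarith : η ξ - 1 = 0)]
    · exact absurd h hξne
  have hη : ∀ x, η x = ⟪x, ξ⟫ := by
    intro x
    have h1 := hcomp x ξ
    rw [hφξ, inner_zero_right, hηξ, mul_one] at h1
    linarith
  have hskew : ∀ x y, ⟪φ x, y⟫ = -⟪x, φ y⟫ := by
    intro x y
    have h1 := hcomp x (φ y)
    rw [hηφ, mul_zero, sub_zero, hφ2 y, inner_add_right, inner_neg_right,
      inner_smul_right] at h1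
    have h2 : ⟪φ x, ξ⟫ = 0 := by rw [← hη (φ x)]; exact hηφ x
    rw [h2] at h1
    linarith
  have z1 : ∀ y z, F 0 y z = 0 := fun y z => (hTri.1 y z).map_zero
  have hFξ3 : F ξ ξ ξ = 0 := by have := hA ξ ξ ξ; linarith
  have compLin : ∀ (G : V → ℝ), IsLinearMap ℝ G → IsLinearMap ℝ (fun x => G (φ x)) :=
    fun G hG => ⟨fun a b => by rw [map_add, hG.map_add], fun c a => by rw [map_smul, hG.map_smul]⟩
  have expand : ∀ (G : V → ℝ), IsLinearMap ℝ G → ∀ x, G x = ∑ i, ⟪e i, x⟫ * G (e i) := by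
    intro G hG x
    have h1 := congrArg (IsLinearMap.mk' G hG) (e.sum_repr' x)
    rw [map_sum] at h1
    simpa [smul_eq_mul] using h1.symm
  have sum_eta : ∀ (G : V → ℝ), IsLinearMap ℝ G → ∑ i, η (e i) * G (e i) = G ξ := by
    intro G hG
    rw [expand G hG ξ]
    exact Finset.sum_congr rfl fun i _ => by rw [hη]
  have hη2 : ∑ i, η (e i) * η (e i) = 1 := by
    have h1 := e.sum_inner_mul_inner ξ ξ
    rw [hξξ] at h1
    rw [← h1]
    exact Finset.sum_congr rfl fun i _ => by rw [hη, real_inner_comm ξ (e i)]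
  have hortho : ∀ i j, ⟪e i, e j⟫ = if i = j then (1:ℝ) else 0 :=
    orthonormal_iff_ite.mp e.orthonormal
  have keyB : ∀ (B : V → V → ℝ), (∀ y, IsLinearMap ℝ fun x => B x y) →
      (∀ x, IsLinearMap ℝ fun y => B x y) →
      ∑ i, B (φ (e i)) (φ (e i)) = (∑ i, B (e i) (e i)) - B ξ ξ := by
    intro B hB1 hB2
    have step1 : ∀ i, B (φ (e i)) (φ (e i)) =
        ∑ j, ∑ k, (⟪e j, φ (e i)⟫ * ⟪e k, φ (e i)⟫) * B (e j) (e k) := by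
      intro i
      rw [expand (fun x => B x (φ (e i))) (hB1 _) (φ (e i))]
      refine Finset.sum_congr rfl fun j _ => ?_
      rw [expand (fun y => B (e j) y) (hB2 _) (φ (e i)), Finset.mul_sum]
      exact Finset.sum_congr rfl fun k _ => by ring
    have h2 : ∀ j, ∑ k, ⟪e j, e k⟫ * B (e j) (e k) = B (e j) (e j) := by
      intro j
      rw [Finset.sum_congr rfl fun k _ => by rw [hortho j k]]
      simp
    have h3 : ∑ j, ∑ k, (η (e j) * η (e k)) * B (e j) (e k) = B ξ ξ := by
      have hi : ∀ j, ∑ k, (η (e j) * η (e k)) * B (e j) (e k) = η (e j) * B (e j) ξ := by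
        intro j
        rw [← sum_eta (fun y => B (e j) y) (hB2 (e j)), Finset.mul_sum]
        exact Finset.sum_congr rfl fun k _ => by ring
      rw [Finset.sum_congr rfl fun j _ => hi j]
      exact sum_eta (fun x => B x ξ) (hB1 ξ)
    calc ∑ i, B (φ (e i)) (φ (e i))
        = ∑ i, ∑ j, ∑ k, (⟪e j, φ (e i)⟫ * ⟪e k, φ (e i)⟫) * B (e j) (e k) :=
          Finset.sum_congr rfl fun i _ => step1 i
      _ = ∑ j, ∑ k, (∑ i, ⟪e j, φ (e i)⟫ * ⟪e k, φ (e i)⟫) * B (e j) (e k) := by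
          rw [Finset.sum_comm]
          refine Finset.sum_congr rfl fun j _ => ?_
          rw [Finset.sum_comm]
          refine Finset.sum_congr rfl fun k _ => ?_
          rw [Finset.sum_mul]
      _ = ∑ j, ∑ k, (⟪e j, e k⟫ - η (e j) * η (e k)) * B (e j) (e k) := by
          refine Finset.sum_congr rfl fun j _ => Finset.sum_congr rfl fun k _ => ?_
          congr 1
          have h1 : ∀ i, ⟪e j, φ (e i)⟫ * ⟪e k, φ (e i)⟫ = ⟪φ (e j), e i⟫ * ⟪e i, φ (e k)⟫ := by
            intro i
            have a1 : ⟪φ (e j), e i⟫ = -⟪e j, φ (e i)⟫ := hskew _ _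
            have a2 : ⟪φ (e k), e i⟫ = -⟪e k, φ (e i)⟫ := hskew _ _
            have a3 : ⟪e i, φ (e k)⟫ = ⟪φ (e k), e i⟫ := real_inner_comm _ _
            rw [a3, a1, a2]; ring
          calc ∑ i, ⟪e j, φ (e i)⟫ * ⟪e k, φ (e i)⟫
              = ∑ i, ⟪φ (e j), e i⟫ * ⟪e i, φ (e k)⟫ := Finset.sum_congr rfl fun i _ => h1 i
            _ = ⟪φ (e j), φ (e k)⟫ := e.sum_inner_mul_inner _ _
            _ = ⟪e j, e k⟫ - η (e j) * η (e k) := hcomp _ _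
      _ = (∑ j, B (e j) (e j)) - B ξ ξ := by
          calc ∑ j, ∑ k, (⟪e j, e k⟫ - η (e j) * η (e k)) * B (e j) (e k)
              = ∑ j, (∑ k, ⟪e j, e k⟫ * B (e j) (e k)
                  - ∑ k, (η (e j) * η (e k)) * B (e j) (e k)) := by
                refine Finset.sum_congr rfl fun j _ => ?_
                rw [← Finset.sum_sub_distrib]
                exact Finset.sum_congr rfl fun k _ => by ring
            _ = (∑ j, B (e j) (e j)) - B ξ ξ := by
                rw [Finset.sum_sub_distrib, Finset.sum_congr rfl fun j _ => h2 j, h3]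
  have keyC : ∀ (B : V → V → ℝ), (∀ y, IsLinearMap ℝ fun x => B x y) →
      (∀ x, IsLinearMap ℝ fun y => B x y) →
      ∑ i, B (φ (e i)) (e i) = -∑ i, B (e i) (φ (e i)) := by
    intro B hB1 hB2
    calc ∑ i, B (φ (e i)) (e i)
        = ∑ i, ∑ j, ⟪e j, φ (e i)⟫ * B (e j) (e i) :=
          Finset.sum_congr rfl fun i _ => expand (fun x => B x (e i)) (hB1 _) _
      _ = ∑ j, ∑ i, -(⟪e i, φ (e j)⟫ * B (e j) (e i)) := by
          rw [Finset.sum_comm]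
          refine Finset.sum_congr rfl fun j _ => Finset.sum_congr rfl fun i _ => ?_
          have a1 : ⟪φ (e j), e i⟫ = -⟪e j, φ (e i)⟫ := hskew _ _
          have a2 : ⟪e i, φ (e j)⟫ = ⟪φ (e j), e i⟫ := real_inner_comm _ _
          rw [a2, a1]; ring
      _ = -∑ j, B (e j) (φ (e j)) := by
          rw [← Finset.sum_neg_distrib]
          refine Finset.sum_congr rfl fun j _ => ?_
          rw [Finset.sum_neg_distrib]
          congr 1
          exact (expand (fun y => B (e j) y) (hB2 (e j)) (φ (e j))).symm
  have hsum1 : ∑ i, F (e i) ξ (e i) = -∑ i, F (e i) (e i) ξ := by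
    rw [← Finset.sum_neg_distrib]
    exact Finset.sum_congr rfl fun i _ => hA _ _ _
  have hsum2 : ∑ i, F (e i) ξ (φ (e i)) = -∑ i, F (e i) (φ (e i)) ξ := by
    rw [← Finset.sum_neg_distrib]
    exact Finset.sum_congr rfl fun i _ => hA _ _ _
  refine ⟨?_, ?_, ?_, ?_, ?_, ?_, ?_, ?_, ?_, ?_, ?_, ?_⟩
  · -- f(F1) = ω(F)
    intro z
    simp only [fTr, F1]
    exact sum_eta (fun y => F ξ y z) (hTri.2.1 ξ z)
  · -- f*(F1) = 0
    intro z
    simp only [fTrStar, F1]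
    have h1 : ∑ i, η (e i) * F ξ (φ (e i)) z = F ξ (φ ξ) z :=
      sum_eta (fun y => F ξ (φ y) z) (compLin _ (hTri.2.1 ξ z))
    rw [h1, hφξ]
    exact (hTri.2.1 ξ z).map_zero
  · -- ω(F1) = ω(F)
    intro z
    simp only [F1]
    rw [hηξ, one_mul]
  · -- f(F2)
    intro z
    simp only [fTr, F2]
    rw [Finset.sum_sub_distrib]
    have h1 : ∑ i, η (e i) * F (e i) ξ z = F ξ ξ z :=
      sum_eta (fun x => F x ξ z) (hTri.1 ξ z)
    rw [h1, ← Finset.mul_sum, hsum1]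
    ring
  · -- f*(F2)
    intro z
    simp only [fTrStar, F2, hηφ, zero_mul, zero_sub]
    rw [Finset.sum_neg_distrib, ← Finset.mul_sum, hsum2]
    ring
  · -- ω(F2)
    intro z
    simp only [F2]
    rw [hηξ, hFξ3, one_mul, mul_zero, sub_zero]
  · -- f(F3)
    intro z
    simp only [fTr, F3]
    rw [Finset.sum_sub_distrib]
    have hA7 : ∑ i, η (e i) * η (e i) * F ξ ξ z = F ξ ξ z := by
      rw [← Finset.sum_mul, hη2, one_mul]
    have hB7 : ∑ i, η (e i) * η z * F ξ ξ (e i) = 0 := by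
      have h1 : ∑ i, η (e i) * F ξ ξ (e i) = F ξ ξ ξ :=
        sum_eta (fun w => F ξ ξ w) (hTri.2.2 ξ ξ)
      calc ∑ i, η (e i) * η z * F ξ ξ (e i)
          = η z * ∑ i, η (e i) * F ξ ξ (e i) := by
            rw [Finset.mul_sum]; exact Finset.sum_congr rfl fun i _ => by ring
        _ = 0 := by rw [h1, hFξ3, mul_zero]
    rw [hA7, hB7, sub_zero]
  · -- f*(F3)
    intro z
    simp only [fTrStar, F3, hηφ, mul_zero, zero_mul, zero_sub]
    rw [Finset.sum_neg_distrib, neg_eq_zero]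
    have h1 : ∑ i, η (e i) * F ξ ξ (φ (e i)) = F ξ ξ (φ ξ) :=
      sum_eta (fun w => F ξ ξ (φ w)) (compLin _ (hTri.2.2 ξ ξ))
    calc ∑ i, η (e i) * η z * F ξ ξ (φ (e i))
        = η z * ∑ i, η (e i) * F ξ ξ (φ (e i)) := by
          rw [Finset.mul_sum]; exact Finset.sum_congr rfl fun i _ => by ring
      _ = 0 := by rw [h1, hφξ, (hTri.2.2 ξ ξ).map_zero, mul_zero]
  · -- ω(F3)
    intro z
    simp only [F3]
    rw [hηξ, hFξ3]; ring
  · -- f(F4)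
    intro z
    simp only [fTr, F4]
    rw [Finset.sum_sub_distrib]
    have h10a : ∑ i, η (e i) * F (φ (e i)) ξ (φ z) = F (φ ξ) ξ (φ z) :=
      sum_eta (fun x => F (φ x) ξ (φ z)) (compLin _ (hTri.1 ξ (φ z)))
    have h10b : ∑ i, F (φ (e i)) ξ (φ (e i)) = (∑ i, F (e i) ξ (e i)) - F ξ ξ ξ :=
      keyB (fun x y => F x ξ y) (fun y => hTri.1 ξ y) (fun x => hTri.2.2 x ξ)
    rw [h10a, hφξ, z1 ξ (φ z), ← Finset.mul_sum, h10b, hsum1, hFξ3]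
    ring
  · -- f*(F4)
    intro z
    simp only [fTrStar, F4, hηφ, zero_mul, zero_sub]
    have hsplit : ∀ i, F (φ (e i)) ξ (φ (φ (e i))) =
        -F (φ (e i)) ξ (e i) + η (e i) * F (φ (e i)) ξ ξ := by
      intro i
      have L := hTri.2.2 (φ (e i)) ξ
      rw [hφ2 (e i), L.map_add, L.map_neg, L.map_smul, smul_eq_mul]
    have hsumA : ∑ i, η (e i) * F (φ (e i)) ξ ξ = F (φ ξ) ξ ξ :=
      sum_eta (fun x => F (φ x) ξ ξ) (compLin _ (hTri.1 ξ ξ))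
    have hsumB : ∑ i, F (φ (e i)) ξ (e i) = -∑ i, F (e i) ξ (φ (e i)) :=
      keyC (fun x y => F x ξ y) (fun y => hTri.1 ξ y) (fun x => hTri.2.2 x ξ)
    calc ∑ i, -(η z * F (φ (e i)) ξ (φ (φ (e i))))
        = ∑ i, (η z * F (φ (e i)) ξ (e i) - η z * (η (e i) * F (φ (e i)) ξ ξ)) := by
          refine Finset.sum_congr rfl fun i _ => ?_
          rw [hsplit i]; ring
      _ = η z * ∑ i, F (φ (e i)) ξ (e i) - η z * ∑ i, η (e i) * F (φ (e i)) ξ ξ := by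
          rw [Finset.sum_sub_distrib, Finset.mul_sum, Finset.mul_sum]
      _ = fTrStar φ e F ξ * η z := by
          rw [hsumB, hsumA, hφξ, z1 ξ ξ, hsum2]
          simp only [fTrStar]; ring
  · -- ω(F4)
    intro z
    simp only [F4]
    rw [hφξ, z1, z1]
    ring
end
end

section
/- For every F ∈ 𝔽 the following trace identities hold: f(F₅(F)) = f(F)(ξ)·η, f*(F₅(F)) = −f*(F)(ξ)·η, ω(F₅(F)) = 0; f(F₆(F)) = f(F)(ξ)·η, f*(F₆(F)) = −f*(F)(ξ)·η, ω(F₆(F)) = 0; f(F₇(F)) = f(F)(ξ)·η, f*(F₇(F)) = 0, ω(F₇(F)) = 0; f(F₈(F)) = 0, f*(F₈(F)) = f*(F)(ξ)·η, ω(F₈(F)) = 0. -/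
open scoped BigOperators RealInnerProductSpace

noncomputable section

variable {V : Type*} [NormedAddCommGroup V] [InnerProductSpace ℝ V]

theorem stmt6 (n : ℕ) (φ : V →ₗ[ℝ] V) (ξ : V) (η : V →ₗ[ℝ] ℝ)
    (hacm : ACM n φ ξ η) (hn : 1 ≤ n) (e : OrthonormalBasis (Fin (2 * n + 1)) ℝ V)
    (F : V → V → V → ℝ) (hFmem : InF φ ξ η F) :
    (∀ z, fTr e (F5 ξ η F) z = fTr e F ξ * η z) ∧
    (∀ z, fTrStar φ e (F5 ξ η F) z = -(fTrStar φ e F ξ * η z)) ∧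
    (∀ z, F5 ξ η F ξ ξ z = 0) ∧
    (∀ z, fTr e (F6 φ ξ η F) z = fTr e F ξ * η z) ∧
    (∀ z, fTrStar φ e (F6 φ ξ η F) z = -(fTrStar φ e F ξ * η z)) ∧
    (∀ z, F6 φ ξ η F ξ ξ z = 0) ∧
    (∀ z, fTr e (F7 n e ξ η F) z = fTr e F ξ * η z) ∧
    (∀ z, fTrStar φ e (F7 n e ξ η F) z = 0) ∧
    (∀ z, F7 n e ξ η F ξ ξ z = 0) ∧
    (∀ z, fTr e (F8 n φ e ξ η F) z = 0) ∧
    (∀ z, fTrStar φ e (F8 n φ e ξ η F) z = fTrStar φ e F ξ * η z) ∧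
    (∀ z, F8 n φ e ξ η F ξ ξ z = 0) := by
  obtain ⟨hdim, hφφ, hφξ, hηφ, hξξ, hmet⟩ := hacm
  obtain ⟨⟨hl1, hl2, hl3⟩, hskewF, hphiF⟩ := hFmem
  have hηξ : η ξ = 1 := by
    have h := congrArg (fun v => ⟪v, ξ⟫) (hφφ ξ)
    simp only [hφξ, map_zero, inner_add_left, inner_smul_left, inner_neg_left,
      RCLike.star_def, conj_trivial, inner_zero_left] at h
    rw [hξξ] at h; linarith
  have hηx : ∀ x, η x = ⟪x, ξ⟫ := by
    intro x
    have h := hmet x ξ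
    rw [hφξ, inner_zero_right, hηξ, mul_one] at h
    linarith
  have hφort : ∀ x, ⟪φ x, ξ⟫ = 0 := fun x => by rw [← hηx]; exact hηφ x
  have hskew : ∀ x y, ⟪φ x, y⟫ = -⟪x, φ y⟫ := by
    intro x y
    have h := hmet x (φ y)
    rw [hηφ, mul_zero, sub_zero, hφφ] at h
    rw [inner_add_right, inner_smul_right, inner_neg_right, hφort, mul_zero, add_zero] at h
    linarith
  have hinnerφ : ∀ x, ⟪x, φ x⟫ = 0 := by
    intro x
    have h1 := hskew x x
    have h2 := real_inner_comm (φ x) x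
    linarith
  have hξφ : ∀ z, ⟪ξ, φ z⟫ = 0 := by
    intro z
    rw [real_inner_comm, ← hηx]; exact hηφ z
  have hξz : ∀ z, ⟪ξ, z⟫ = η z := by
    intro z
    rw [hηx]; exact real_inner_comm z ξ
  have hFyy : ∀ x y, F x y y = 0 := fun x y => by have := hskewF x y y; linarith
  have hsum : ∀ (G : V → ℝ), IsLinearMap ℝ G → ∀ v, ∑ i, ⟪e i, v⟫ * G (e i) = G v := by
    intro G hG v
    conv_rhs => rw [← e.sum_repr' v]
    rw [← IsLinearMap.mk'_apply hG, map_sum]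
    simp [smul_eq_mul]
  have hsumη : ∀ (G : V → ℝ), IsLinearMap ℝ G → ∑ i, η (e i) * G (e i) = G ξ := by
    intro G hG
    have h := hsum G hG ξ
    rw [← h]
    refine Finset.sum_congr rfl (fun i _ => ?_)
    rw [hηx, real_inner_comm]
  have hswap : ∀ (G : V → V → ℝ), (∀ y, IsLinearMap ℝ (fun x => G x y)) →
      (∀ x, IsLinearMap ℝ (G x)) →
      ∑ i, G (φ (e i)) (e i) = -∑ i, G (e i) (φ (e i)) := by
    intro G hG1 hG2
    have step : ∀ i, G (φ (e i)) (e i) = ∑ j, ⟪e j, φ (e i)⟫ * G (e j) (e i) :=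
      fun i => (hsum (fun x => G x (e i)) (hG1 _) (φ (e i))).symm
    calc ∑ i, G (φ (e i)) (e i) = ∑ i, ∑ j, ⟪e j, φ (e i)⟫ * G (e j) (e i) :=
          Finset.sum_congr rfl (fun i _ => step i)
      _ = ∑ j, ∑ i, -(⟪e i, φ (e j)⟫ * G (e j) (e i)) := by
          rw [Finset.sum_comm]
          refine Finset.sum_congr rfl (fun j _ => Finset.sum_congr rfl (fun i _ => ?_))
          have ha := hskew (e j) (e i)
          have hb : ⟪φ (e j), e i⟫ = ⟪e i, φ (e j)⟫ := real_inner_comm (e i) (φ (e j))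
          have hc : ⟪e j, φ (e i)⟫ = -⟪e i, φ (e j)⟫ := by linarith
          rw [hc]; ring
      _ = -∑ j, G (e j) (φ (e j)) := by
          have hj : ∀ j, ∑ i, -(⟪e i, φ (e j)⟫ * G (e j) (e i)) = -(G (e j) (φ (e j))) := by
            intro j
            rw [← hsum (G (e j)) (hG2 _) (φ (e j)), ← Finset.sum_neg_distrib]
          rw [Finset.sum_congr rfl (fun j _ => hj j), ← Finset.sum_neg_distrib]
  have h2n : (2 * (n : ℝ)) ≠ 0 := by
    have : (1 : ℝ) ≤ (n : ℝ) := by exact_mod_cast hn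
    positivity
  have hcard : ∑ i : Fin (2 * n + 1), ⟪e i, e i⟫ = (2 * (n : ℝ) + 1) := by
    have h : ∀ i : Fin (2 * n + 1), ⟪e i, e i⟫ = 1 := by
      intro i
      rw [real_inner_self_eq_norm_sq, e.orthonormal.1 i]; norm_num
    rw [Finset.sum_congr rfl (fun i _ => h i)]
    simp
  have hinξz : ∀ z : V, IsLinearMap ℝ (fun x : V => ⟪x, z⟫) :=
    fun z => ⟨fun a b => inner_add_left a b z, fun c a => by simp [inner_smul_left]⟩
  have hGz : ∀ z : V, ∑ i, η (e i) * ⟪e i, z⟫ = η z := by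
    intro z
    rw [hsumη (fun x => ⟪x, z⟫) (hinξz z)]
    exact hξz z
  have hlinφ : ∀ a b : V, IsLinearMap ℝ (fun x : V => F a b (φ x)) :=
    fun a b => ⟨fun u v => by rw [map_add, (hl3 a b).map_add],
             fun c u => by rw [map_smul, (hl3 a b).map_smul]⟩
  refine ⟨?_, ?_, ?_, ?_, ?_, ?_, ?_, ?_, ?_, ?_, ?_, ?_⟩
  · -- f(F5)
    intro z
    simp only [fTr, F5]
    rw [Finset.sum_sub_distrib, hsumη (fun x => F z ξ x) (hl3 z ξ), ← Finset.mul_sum,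
      hFyy]
    have h : ∑ i, F (e i) ξ (e i) = -∑ i, F (e i) (e i) ξ := by
      rw [← Finset.sum_neg_distrib]
      exact Finset.sum_congr rfl (fun i _ => hskewF (e i) ξ (e i))
    rw [h]; ring
  · -- f*(F5)
    intro z
    simp only [fTrStar, F5]
    rw [Finset.sum_sub_distrib]
    have h1 : ∑ i, η (φ (e i)) * F z ξ (e i) = 0 :=
      Finset.sum_eq_zero (fun i _ => by rw [hηφ]; ring)
    rw [h1, ← Finset.mul_sum,
      hswap (fun x y => F x ξ y) (fun y => hl1 ξ y) (fun x => hl3 x ξ)]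
    have h2 : ∑ i, F (e i) ξ (φ (e i)) = -∑ i, F (e i) (φ (e i)) ξ := by
      rw [← Finset.sum_neg_distrib]
      exact Finset.sum_congr rfl (fun i _ => hskewF (e i) ξ (φ (e i)))
    rw [h2]; ring
  · -- ω(F5)
    intro z
    simp only [F5]
    rw [hFyy, hFyy]; ring
  · -- f(F6)
    intro z
    simp only [fTr, F6]
    rw [Finset.sum_sub_distrib, hsumη (fun x => F (φ z) ξ (φ x)) (hlinφ _ _),
      hφξ, (hl3 (φ z) ξ).map_zero, ← Finset.mul_sum,
      hswap (fun x y => F x ξ (φ y)) (fun y => hl1 ξ (φ y)) (fun x => hlinφ x ξ)]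
    have h : ∑ i, F (e i) ξ (φ (φ (e i))) = ∑ i, F (e i) (e i) ξ := by
      refine Finset.sum_congr rfl (fun i _ => ?_)
      rw [hφφ, (hl3 (e i) ξ).map_add, (hl3 (e i) ξ).map_neg, (hl3 (e i) ξ).map_smul,
        hFyy (e i) ξ, smul_zero, add_zero]
      have := hskewF (e i) ξ (e i)
      linarith
    rw [h]; ring
  · -- f*(F6)
    intro z
    simp only [fTrStar, F6]
    rw [Finset.sum_sub_distrib]
    have h1 : ∑ i, η (φ (e i)) * F (φ z) ξ (φ (e i)) = 0 :=
      Finset.sum_eq_zero (fun i _ => by rw [hηφ]; ring)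
    rw [h1, ← Finset.mul_sum]
    have h3 : ∑ i, F (φ (φ (e i))) ξ (φ (e i)) = ∑ i, F (e i) (φ (e i)) ξ := by
      have key : ∀ i : Fin (2 * n + 1), F (φ (φ (e i))) ξ (φ (e i)) =
          F (e i) (φ (e i)) ξ + η (e i) * F ξ ξ (φ (e i)) := by
        intro i
        rw [hφφ, (hl1 ξ (φ (e i))).map_add, (hl1 ξ (φ (e i))).map_neg,
          (hl1 ξ (φ (e i))).map_smul, smul_eq_mul]
        have := hskewF (e i) ξ (φ (e i))
        linarith
      rw [Finset.sum_congr rfl (fun i _ => key i), Finset.sum_add_distrib,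
        hsumη (fun x => F ξ ξ (φ x)) (hlinφ ξ ξ), hφξ, (hl3 ξ ξ).map_zero, add_zero]
    rw [h3]; ring
  · -- ω(F6)
    intro z
    simp only [F6]
    rw [hφξ, (hl3 (φ z) ξ).map_zero]
    have h0 : F (0 : V) ξ (0 : V) = 0 := (hl1 ξ 0).map_zero
    rw [h0]; ring
  · -- f(F7)
    intro z
    simp only [fTr, F7]
    rw [← Finset.mul_sum, Finset.sum_sub_distrib, ← Finset.mul_sum, hcard, hGz]
    field_simp
    ring
  · -- f*(F7)
    intro z
    simp only [fTrStar, F7]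
    refine Finset.sum_eq_zero (fun i _ => ?_)
    rw [hinnerφ, hηφ]; ring
  · -- ω(F7)
    intro z
    simp only [F7]
    rw [hξξ, hηξ, hξz]; ring
  · -- f(F8)
    intro z
    simp only [fTr, F8]
    rw [← Finset.mul_sum, Finset.sum_sub_distrib, ← Finset.mul_sum]
    have ha : ∑ i : Fin (2 * n + 1), ⟪e i, φ (e i)⟫ = 0 :=
      Finset.sum_eq_zero (fun i _ => hinnerφ _)
    have hb : ∑ i, η (e i) * ⟪e i, φ z⟫ = 0 := by
      rw [hGz, hηx]
      rw [real_inner_comm]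
      exact hξφ z
    rw [ha, hb]; ring
  · -- f*(F8)
    intro z
    simp only [fTrStar, F8]
    rw [← Finset.mul_sum, Finset.sum_sub_distrib, ← Finset.mul_sum]
    have h1 : ∑ i : Fin (2 * n + 1), ⟪e i, φ (φ (e i))⟫ = -(2 * (n:ℝ)) := by
      have key : ∀ i : Fin (2 * n + 1), ⟪e i, φ (φ (e i))⟫ =
          -⟪e i, e i⟫ + η (e i) * ⟪e i, ξ⟫ := by
        intro i
        rw [hφφ, inner_add_right, inner_neg_right, inner_smul_right]
      rw [Finset.sum_congr rfl (fun i _ => key i), Finset.sum_add_distrib,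
        Finset.sum_neg_distrib, hcard, hsumη (fun x => ⟪x, ξ⟫) (hinξz ξ), hξξ]
      ring
    have h2 : ∑ i, η (φ (e i)) * ⟪e i, φ z⟫ = 0 :=
      Finset.sum_eq_zero (fun i _ => by rw [hηφ]; ring)
    rw [h1, h2]
    field_simp
    ring
  · -- ω(F8)
    intro z
    simp only [F8]
    rw [hinnerφ ξ, hξφ z]; ring
end
end

section
/- The map L₁ : 𝔽 → 𝔽 defined by L₁(F) = F − 2F₃(F) is an involutive linear isometry of 𝔽 (with respect to the inner product on 𝔽), and it commutes with the action on 𝔽 of every linear isometry A of V satisfying A∘φ = φ∘A and Aξ = ξ. -/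
open scoped BigOperators RealInnerProductSpace

noncomputable section

variable {V : Type*} [NormedAddCommGroup V] [InnerProductSpace ℝ V]

section Aux

variable {V : Type*} [NormedAddCommGroup V] [InnerProductSpace ℝ V]

/-- Sum of linear maps weighted by constants is linear. -/
lemma isLin_sum {ι : Type*} [Fintype ι] (f : ι → V → ℝ) (h : ∀ i, IsLinearMap ℝ (f i))
    (c : ι → ℝ) : IsLinearMap ℝ (fun y => ∑ i, f i y * c i) := by
  refine ⟨fun p q => ?_, fun m p => ?_⟩
  · rw [← Finset.sum_add_distrib]
    exact Finset.sum_congr rfl fun i _ => by rw [(h i).map_add]; ring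
  · rw [smul_eq_mul, Finset.mul_sum]
    exact Finset.sum_congr rfl fun i _ => by rw [(h i).map_smul, smul_eq_mul]; ring

/-- Contraction of a linear functional against `η` over an orthonormal basis. -/
lemma contract1 {ι : Type*} [Fintype ι] (e : OrthonormalBasis ι ℝ V) (ξ : V)
    (η : V →ₗ[ℝ] ℝ) (hη : ∀ x, η x = ⟪x, ξ⟫) (T : V → ℝ) (hT : IsLinearMap ℝ T) :
    ∑ i, η (e i) * T (e i) = T ξ := by
  have hL : T ξ = (IsLinearMap.mk' T hT) ξ := rfl
  rw [hL, ← e.sum_repr' ξ, map_sum]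
  refine Finset.sum_congr rfl fun i _ => ?_
  rw [map_smul, smul_eq_mul, hη, real_inner_comm]
  rfl

lemma contract3 {ι : Type*} [Fintype ι] (e : OrthonormalBasis ι ℝ V) (ξ : V)
    (η : V →ₗ[ℝ] ℝ) (hη : ∀ x, η x = ⟪x, ξ⟫) (F : V → V → V → ℝ)
    (hF : Trilinear F) (c : ι → ℝ) :
    ∑ i, ∑ j, ∑ k, F (e i) (e j) (e k) * (η (e i) * η (e j) * c k)
      = ∑ k, F ξ ξ (e k) * c k := by
  have step1 : ∀ x : V, ∑ j, η (e j) * (∑ k, F x (e j) (e k) * c k)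
      = ∑ k, F x ξ (e k) * c k :=
    fun x => contract1 e ξ η hη (fun y => ∑ k, F x y (e k) * c k)
      (isLin_sum _ (fun k => hF.2.1 x (e k)) c)
  calc ∑ i, ∑ j, ∑ k, F (e i) (e j) (e k) * (η (e i) * η (e j) * c k)
      = ∑ i, η (e i) * (∑ j, η (e j) * (∑ k, F (e i) (e j) (e k) * c k)) := by
        simp only [Finset.mul_sum]
        exact Finset.sum_congr rfl fun i _ => Finset.sum_congr rfl fun j _ =>
          Finset.sum_congr rfl fun k _ => by ring
    _ = ∑ i, η (e i) * (∑ k, F (e i) ξ (e k) * c k) := by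
        exact Finset.sum_congr rfl fun i _ => by rw [step1]
    _ = ∑ k, F ξ ξ (e k) * c k :=
        contract1 e ξ η hη (fun x => ∑ k, F x ξ (e k) * c k)
          (isLin_sum _ (fun k => hF.1 ξ (e k)) c)

lemma contract13 {ι : Type*} [Fintype ι] (e : OrthonormalBasis ι ℝ V) (ξ : V)
    (η : V →ₗ[ℝ] ℝ) (hη : ∀ x, η x = ⟪x, ξ⟫) (F : V → V → V → ℝ)
    (hF : Trilinear F) (c : ι → ℝ) :
    ∑ i, ∑ j, ∑ k, F (e i) (e j) (e k) * (η (e i) * η (e k) * c j)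
      = ∑ j, F ξ (e j) ξ * c j := by
  have step1 : ∀ (x y : V), ∑ k, η (e k) * F x y (e k) = F x y ξ :=
    fun x y => contract1 e ξ η hη (fun z => F x y z) (hF.2.2 x y)
  calc ∑ i, ∑ j, ∑ k, F (e i) (e j) (e k) * (η (e i) * η (e k) * c j)
      = ∑ i, η (e i) * (∑ j, (∑ k, η (e k) * F (e i) (e j) (e k)) * c j) := by
        simp only [Finset.mul_sum, Finset.sum_mul]
        exact Finset.sum_congr rfl fun i _ => Finset.sum_congr rfl fun j _ =>
          Finset.sum_congr rfl fun k _ => by ring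
    _ = ∑ i, η (e i) * (∑ j, F (e i) (e j) ξ * c j) := by
        refine Finset.sum_congr rfl fun i _ => ?_
        congr 1
        exact Finset.sum_congr rfl fun j _ => by rw [step1]
    _ = ∑ j, F ξ (e j) ξ * c j :=
        contract1 e ξ η hη (fun x => ∑ j, F x (e j) ξ * c j)
          (isLin_sum _ (fun j => hF.1 (e j) ξ) c)

lemma quad_sum {ι : Type*} [Fintype ι] (a f g : ι → ℝ)
    (haa : ∑ i, a i * a i = 1) (haf : ∑ i, a i * f i = 0) (hag : ∑ i, a i * g i = 0) :
    ∑ i, ∑ j, ∑ k, (a i * a j * f k - a i * a k * f j) * (a i * a j * g k - a i * a k * g j)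
      = 2 * ∑ k, f k * g k := by
  have hD : ∑ j, ∑ k, ((a j * f k - a k * f j) * (a j * g k - a k * g j))
      = 2 * ∑ k, f k * g k := by
    have expand : (∑ j, ∑ k, ((a j * f k - a k * f j) * (a j * g k - a k * g j)))
        = (∑ j, a j * a j) * (∑ k, f k * g k) - (∑ j, a j * g j) * (∑ k, a k * f k)
          - (∑ j, a j * f j) * (∑ k, a k * g k) + (∑ j, f j * g j) * (∑ k, a k * a k) := by
      simp only [Finset.sum_mul_sum, ← Finset.sum_sub_distrib, ← Finset.sum_add_distrib]
      exact Finset.sum_congr rfl fun j _ => Finset.sum_congr rfl fun k _ => by ring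
    rw [expand, haa, haf, hag]
    have : ∑ j, f j * g j = ∑ k, f k * g k := rfl
    rw [this]; ring
  calc ∑ i, ∑ j, ∑ k, (a i * a j * f k - a i * a k * f j) * (a i * a j * g k - a i * a k * g j)
      = ∑ i, (a i * a i) * (∑ j, ∑ k, ((a j * f k - a k * f j) * (a j * g k - a k * g j))) := by
        simp only [Finset.mul_sum]
        exact Finset.sum_congr rfl fun i _ => Finset.sum_congr rfl fun j _ =>
          Finset.sum_congr rfl fun k _ => by ring
    _ = 2 * ∑ k, f k * g k := by rw [← Finset.sum_mul, haa, hD, one_mul]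

end Aux

theorem stmt7 (n : ℕ) (φ : V →ₗ[ℝ] V) (ξ : V) (η : V →ₗ[ℝ] ℝ)
    (hacm : ACM n φ ξ η) (e : OrthonormalBasis (Fin (2 * n + 1)) ℝ V) :
    (∀ F, InF φ ξ η F → InF φ ξ η (L1 ξ η F)) ∧
    (∀ (a : ℝ) (F G : V → V → V → ℝ),
      L1 ξ η (fun x y z => a * F x y z + G x y z) =
        fun x y z => a * L1 ξ η F x y z + L1 ξ η G x y z) ∧
    (∀ F, InF φ ξ η F → L1 ξ η (L1 ξ η F) = F) ∧
    (∀ F G, InF φ ξ η F → InF φ ξ η G →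
      innerF e (L1 ξ η F) (L1 ξ η G) = innerF e F G) ∧
    (∀ A : V ≃ₗᵢ[ℝ] V, (∀ x, A (φ x) = φ (A x)) → A ξ = ξ →
      ∀ F, InF φ ξ η F → L1 ξ η (actA A F) = actA A (L1 ξ η F)) := by
  obtain ⟨hdim, hphi2, hphixi, hetaphi, hxixi, hinner⟩ := hacm
  have hξne : ξ ≠ 0 := by
    intro h
    rw [h, inner_zero_left] at hxixi
    norm_num at hxixi
  have hηξ : η ξ = 1 := by
    have h0 : φ (φ ξ) = -ξ + η ξ • ξ := hphi2 ξ
    rw [hphixi, map_zero] at h0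
    have h1 : (η ξ - 1) • ξ = 0 := by
      rw [sub_smul, one_smul]
      rw [eq_comm, neg_add_eq_zero] at h0
      rw [← h0, sub_self]
    rcases smul_eq_zero.mp h1 with h | h
    · linarith [sub_eq_zero.mp h]
    · exact absurd h hξne
  have hη : ∀ x, η x = ⟪x, ξ⟫ := by
    intro x
    have h0 := hinner x ξ
    rw [hphixi, inner_zero_right, hηξ, mul_one] at h0
    linarith
  refine ⟨?_, ?_, ?_, ?_, ?_⟩
  · -- L1 preserves InF
    rintro F ⟨hTri, hAlt, hRel⟩
    have hFξξξ : F ξ ξ ξ = 0 := by have := hAlt ξ ξ ξ; linarith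
    refine ⟨⟨?_, ?_, ?_⟩, ?_, ?_⟩
    · intro y z
      refine ⟨fun p q => ?_, fun c p => ?_⟩
      · simp only [L1, F3, (hTri.1 y z).map_add, map_add]; ring
      · simp only [L1, F3, (hTri.1 y z).map_smul, map_smul, smul_eq_mul]; ring
    · intro x z
      refine ⟨fun p q => ?_, fun c p => ?_⟩
      · simp only [L1, F3, (hTri.2.1 x z).map_add, (hTri.2.2 ξ ξ).map_add, map_add]; ring
      · simp only [L1, F3, (hTri.2.1 x z).map_smul, (hTri.2.2 ξ ξ).map_smul, map_smul,
          smul_eq_mul]; ring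
    · intro x y
      refine ⟨fun p q => ?_, fun c p => ?_⟩
      · simp only [L1, F3, (hTri.2.2 x y).map_add, (hTri.2.2 ξ ξ).map_add, map_add]; ring
      · simp only [L1, F3, (hTri.2.2 x y).map_smul, (hTri.2.2 ξ ξ).map_smul, map_smul,
          smul_eq_mul]; ring
    · intro x y z
      simp only [L1, F3]
      rw [hAlt x y z]; ring
    · intro x y z
      simp only [L1, F3, hetaphi, hηξ, hFξξξ, mul_zero, zero_mul, one_mul, mul_one, sub_zero]
      linear_combination hRel x y z
  · -- linearity
    intro a F G
    funext x y z
    simp only [L1, F3]; ring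
  · -- involution
    rintro F ⟨hTri, hAlt, hRel⟩
    have hFξξξ : F ξ ξ ξ = 0 := by have := hAlt ξ ξ ξ; linarith
    funext x y z
    simp only [L1, F3, hηξ, hFξξξ, one_mul, mul_one, mul_zero, sub_zero]
    ring
  · -- isometry
    rintro F G ⟨hFTri, hFAlt, _⟩ ⟨hGTri, hGAlt, _⟩
    have hFξξξ : F ξ ξ ξ = 0 := by have := hFAlt ξ ξ ξ; linarith
    have hGξξξ : G ξ ξ ξ = 0 := by have := hGAlt ξ ξ ξ; linarith
    have haa : ∑ i, η (e i) * η (e i) = 1 := by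
      rw [contract1 e ξ η hη η ⟨map_add η, map_smul η⟩, hηξ]
    have haf : ∑ i, η (e i) * F ξ ξ (e i) = 0 := by
      rw [contract1 e ξ η hη (F ξ ξ) (hFTri.2.2 ξ ξ), hFξξξ]
    have hag : ∑ i, η (e i) * G ξ ξ (e i) = 0 := by
      rw [contract1 e ξ η hη (G ξ ξ) (hGTri.2.2 ξ ξ), hGξξξ]
    set M : ℝ := ∑ k, F ξ ξ (e k) * G ξ ξ (e k) with hM
    have hT1 : innerF e F (F3 ξ η G) = 2 * M := by
      have split : innerF e F (F3 ξ η G)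
          = (∑ i, ∑ j, ∑ k, F (e i) (e j) (e k) * (η (e i) * η (e j) * G ξ ξ (e k)))
            - ∑ i, ∑ j, ∑ k, F (e i) (e j) (e k) * (η (e i) * η (e k) * G ξ ξ (e j)) := by
        simp only [innerF, F3, ← Finset.sum_sub_distrib]
        exact Finset.sum_congr rfl fun i _ => Finset.sum_congr rfl fun j _ =>
          Finset.sum_congr rfl fun k _ => by ring
      rw [split, contract3 e ξ η hη F ⟨hFTri.1, hFTri.2.1, hFTri.2.2⟩,
        contract13 e ξ η hη F ⟨hFTri.1, hFTri.2.1, hFTri.2.2⟩]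
      have h2 : ∑ j, F ξ (e j) ξ * G ξ ξ (e j) = -M := by
        rw [hM, ← Finset.sum_neg_distrib]
        exact Finset.sum_congr rfl fun j _ => by rw [hFAlt ξ (e j) ξ]; ring
      rw [h2, hM]; ring
    have hT2 : innerF e (F3 ξ η F) G = 2 * M := by
      have split : innerF e (F3 ξ η F) G
          = (∑ i, ∑ j, ∑ k, G (e i) (e j) (e k) * (η (e i) * η (e j) * F ξ ξ (e k)))
            - ∑ i, ∑ j, ∑ k, G (e i) (e j) (e k) * (η (e i) * η (e k) * F ξ ξ (e j)) := by
        simp only [innerF, F3, ← Finset.sum_sub_distrib]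
        exact Finset.sum_congr rfl fun i _ => Finset.sum_congr rfl fun j _ =>
          Finset.sum_congr rfl fun k _ => by ring
      rw [split, contract3 e ξ η hη G ⟨hGTri.1, hGTri.2.1, hGTri.2.2⟩,
        contract13 e ξ η hη G ⟨hGTri.1, hGTri.2.1, hGTri.2.2⟩]
      have h1 : ∑ k, G ξ ξ (e k) * F ξ ξ (e k) = M := by
        rw [hM]
        exact Finset.sum_congr rfl fun k _ => by ring
      have h2 : ∑ j, G ξ (e j) ξ * F ξ ξ (e j) = -M := by
        rw [hM, ← Finset.sum_neg_distrib]
        exact Finset.sum_congr rfl fun j _ => by rw [hGAlt ξ (e j) ξ]; ring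
      rw [h1, h2]; ring
    have hT3 : innerF e (F3 ξ η F) (F3 ξ η G) = 2 * M := by
      have := quad_sum (fun i => η (e i)) (fun k => F ξ ξ (e k)) (fun k => G ξ ξ (e k))
        haa haf hag
      simpa [innerF, F3, hM] using this
    have expand : innerF e (L1 ξ η F) (L1 ξ η G)
        = innerF e F G - 2 * innerF e F (F3 ξ η G) - 2 * innerF e (F3 ξ η F) G
          + 4 * innerF e (F3 ξ η F) (F3 ξ η G) := by
      simp only [innerF, L1, Finset.mul_sum, ← Finset.sum_sub_distrib, ← Finset.sum_add_distrib]
      exact Finset.sum_congr rfl fun i _ => Finset.sum_congr rfl fun j _ =>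
        Finset.sum_congr rfl fun k _ => by ring
    rw [expand, hT1, hT2, hT3]; ring
  · -- commutes with the action of A
    intro A hAφ hAξ F _
    have hA'ξ : A.symm ξ = ξ := by
      conv_lhs => rw [← hAξ]
      exact A.symm_apply_apply ξ
    have hηA : ∀ x, η (A.symm x) = η x := by
      intro x
      rw [hη, hη]
      calc ⟪A.symm x, ξ⟫ = ⟪A.symm x, A.symm ξ⟫ := by rw [hA'ξ]
        _ = ⟪x, ξ⟫ := A.symm.inner_map_map x ξ
    funext x y z
    simp only [L1, F3, actA, hA'ξ, hηA]
end
end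

section
/- The space 𝔽 decomposes as the orthogonal direct sum 𝔽 = 𝔽₁ ⊕ 𝔽₁^⊥, where 𝔽₁ = {F ∈ 𝔽 : F = F₃(F)} and 𝔽₁^⊥ = {F ∈ 𝔽 : ω(F) = 0}; these are precisely the (−1)- and (+1)-eigenspaces of the involutive isometry L₁(F) = F − 2F₃(F), and both subspaces are invariant under the action on 𝔽 of every linear isometry A of V with A∘φ = φ∘A and Aξ = ξ. -/
open scoped BigOperators RealInnerProductSpace

noncomputable section

variable {V : Type*} [NormedAddCommGroup V] [InnerProductSpace ℝ V]

section AuxStmt8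

variable {n : ℕ} {φ : V →ₗ[ℝ] V} {ξ : V} {η : V →ₗ[ℝ] ℝ}

lemma aux_eta_xi (hacm : ACM n φ ξ η) : η ξ = 1 := by
  obtain ⟨-, h2, h3, -, h5, -⟩ := hacm
  have h := h2 ξ
  rw [h3, map_zero] at h
  have h' := congrArg (fun v => (⟪ξ, v⟫ : ℝ)) h
  simp only [inner_zero_right, inner_add_right, inner_neg_right, real_inner_smul_right, h5,
    mul_one] at h'
  linarith

lemma aux_eta_inner (hacm : ACM n φ ξ η) (x : V) : η x = ⟪x, ξ⟫ := by
  have h6 := hacm.2.2.2.2.2 x ξ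
  rw [hacm.2.2.1, inner_zero_right, aux_eta_xi hacm, mul_one] at h6
  linarith

lemma aux_sum_eta (hacm : ACM n φ ξ η) {ι : Type*} [Fintype ι]
    (e : OrthonormalBasis ι ℝ V) {L : V → ℝ} (hL : IsLinearMap ℝ L) :
    ∑ i, η (e i) * L (e i) = L ξ := by
  calc ∑ i, η (e i) * L (e i) = ∑ i, (⟪e i, ξ⟫ : ℝ) * L (e i) := by
        refine Finset.sum_congr rfl fun i _ => ?_
        rw [aux_eta_inner hacm, real_inner_comm]
    _ = ∑ i, L ((⟪e i, ξ⟫ : ℝ) • e i) := by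
        refine Finset.sum_congr rfl fun i _ => ?_
        rw [hL.map_smul, smul_eq_mul]
    _ = L (∑ i, (⟪e i, ξ⟫ : ℝ) • e i) := (map_sum (hL.mk' L) _ _).symm
    _ = L ξ := by rw [e.sum_repr']

lemma aux_isLinearMap_sum {ι : Type*} (s : Finset ι) (f : ι → V → ℝ)
    (h : ∀ i ∈ s, IsLinearMap ℝ (f i)) :
    IsLinearMap ℝ (fun x => ∑ i ∈ s, f i x) := by
  constructor
  · intro a b
    rw [← Finset.sum_add_distrib]
    exact Finset.sum_congr rfl fun i hi => (h i hi).map_add a b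
  · intro c a
    rw [Finset.smul_sum]
    exact Finset.sum_congr rfl fun i hi => (h i hi).map_smul c a

lemma aux_const_mul {L : V → ℝ} (hL : IsLinearMap ℝ L) (c : ℝ) :
    IsLinearMap ℝ (fun x => c * L x) := by
  constructor
  · intro a b; rw [hL.map_add]; ring
  · intro t a; rw [hL.map_smul]; simp only [smul_eq_mul]; ring

lemma aux_diag {F : V → V → V → ℝ} (hF : InF φ ξ η F) (x y : V) : F x y y = 0 := by
  have := hF.2.1 x y y; linarith

lemma aux_InF_F3 (hacm : ACM n φ ξ η) {F : V → V → V → ℝ} (hF : InF φ ξ η F) :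
    InF φ ξ η (F3 ξ η F) := by
  obtain ⟨hT, hA, hS⟩ := hF
  have hηξ := aux_eta_xi hacm
  have hηφ := hacm.2.2.2.1
  have hFξξξ : F ξ ξ ξ = 0 := aux_diag ⟨hT, hA, hS⟩ ξ ξ
  refine ⟨⟨?_, ?_, ?_⟩, ?_, ?_⟩
  · intro y z
    constructor
    · intro a b; simp only [F3, map_add]; ring
    · intro c a; simp only [F3, map_smul, smul_eq_mul]; ring
  · intro x z
    constructor
    · intro a b
      simp only [F3, map_add, (hT.2.2 ξ ξ).map_add]; ring
    · intro c a
      simp only [F3, map_smul, (hT.2.2 ξ ξ).map_smul, smul_eq_mul]; ring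
  · intro x y
    constructor
    · intro a b
      simp only [F3, map_add, (hT.2.2 ξ ξ).map_add]; ring
    · intro c a
      simp only [F3, map_smul, (hT.2.2 ξ ξ).map_smul, smul_eq_mul]; ring
  · intro x y z; simp only [F3]; ring
  · intro x y z
    simp only [F3, hηφ, hηξ, hFξξξ]; ring

lemma aux_F3_idem (hacm : ACM n φ ξ η) {F : V → V → V → ℝ} (hF : InF φ ξ η F) :
    F3 ξ η (F3 ξ η F) = F3 ξ η F := by
  have hηξ := aux_eta_xi hacm
  have hFξξξ : F ξ ξ ξ = 0 := aux_diag hF ξ ξ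
  funext x y z
  simp only [F3, hηξ, hFξξξ]; ring

lemma aux_InF_sub {F G : V → V → V → ℝ} (hF : InF φ ξ η F) (hG : InF φ ξ η G) :
    InF φ ξ η (fun x y z => F x y z - G x y z) := by
  refine ⟨⟨?_, ?_, ?_⟩, ?_, ?_⟩
  · intro y z
    exact ⟨fun a b => by dsimp only; rw [(hF.1.1 y z).map_add, (hG.1.1 y z).map_add]; ring,
      fun c a => by dsimp only; rw [(hF.1.1 y z).map_smul, (hG.1.1 y z).map_smul]; simp only [smul_eq_mul]; ring⟩
  · intro x z
    exact ⟨fun a b => by dsimp only; rw [(hF.1.2.1 x z).map_add, (hG.1.2.1 x z).map_add]; ring,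
      fun c a => by dsimp only; rw [(hF.1.2.1 x z).map_smul, (hG.1.2.1 x z).map_smul]; simp only [smul_eq_mul]; ring⟩
  · intro x y
    exact ⟨fun a b => by dsimp only; rw [(hF.1.2.2 x y).map_add, (hG.1.2.2 x y).map_add]; ring,
      fun c a => by dsimp only; rw [(hF.1.2.2 x y).map_smul, (hG.1.2.2 x y).map_smul]; simp only [smul_eq_mul]; ring⟩
  · intro x y z
    have h1 := hF.2.1 x y z
    have h2 := hG.2.1 x y z
    dsimp only
    linarith
  · intro x y z
    have h1 := hF.2.2 x y z
    have h2 := hG.2.2 x y z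
    linear_combination h1 - h2

lemma aux_Asymm_xi (A : V ≃ₗᵢ[ℝ] V) (hAξ : A ξ = ξ) : A.symm ξ = ξ := by
  conv_lhs => rw [← hAξ]
  exact A.symm_apply_apply ξ

lemma aux_Asymm_phi (A : V ≃ₗᵢ[ℝ] V) (hAφ : ∀ x, A (φ x) = φ (A x)) (x : V) :
    A.symm (φ x) = φ (A.symm x) := by
  apply A.injective
  rw [A.apply_symm_apply, hAφ, A.apply_symm_apply]

lemma aux_eta_Asymm (hacm : ACM n φ ξ η) (A : V ≃ₗᵢ[ℝ] V) (hAξ : A ξ = ξ) (x : V) :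
    η (A.symm x) = η x := by
  rw [aux_eta_inner hacm, aux_eta_inner hacm]
  conv_lhs => rw [show ξ = A.symm ξ from (aux_Asymm_xi A hAξ).symm]
  exact A.symm.inner_map_map x ξ

lemma aux_actA_InF (hacm : ACM n φ ξ η) (A : V ≃ₗᵢ[ℝ] V)
    (hAφ : ∀ x, A (φ x) = φ (A x)) (hAξ : A ξ = ξ)
    {F : V → V → V → ℝ} (hF : InF φ ξ η F) : InF φ ξ η (actA A F) := by
  refine ⟨⟨?_, ?_, ?_⟩, ?_, ?_⟩
  · intro y z
    exact ⟨fun a b => by simp only [actA, map_add, (hF.1.1 _ _).map_add],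
      fun c a => by simp only [actA, map_smul, (hF.1.1 _ _).map_smul]⟩
  · intro x z
    exact ⟨fun a b => by simp only [actA, map_add, (hF.1.2.1 _ _).map_add],
      fun c a => by simp only [actA, map_smul, (hF.1.2.1 _ _).map_smul]⟩
  · intro x y
    exact ⟨fun a b => by simp only [actA, map_add, (hF.1.2.2 _ _).map_add],
      fun c a => by simp only [actA, map_smul, (hF.1.2.2 _ _).map_smul]⟩
  · intro x y z
    exact hF.2.1 _ _ _
  · intro x y z
    simp only [actA]
    rw [aux_Asymm_phi A hAφ y, aux_Asymm_phi A hAφ z, aux_Asymm_xi A hAξ,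
      ← aux_eta_Asymm hacm A hAξ y, ← aux_eta_Asymm hacm A hAξ z]
    exact hF.2.2 _ _ _

end AuxStmt8

theorem stmt8 (n : ℕ) (φ : V →ₗ[ℝ] V) (ξ : V) (η : V →ₗ[ℝ] ℝ)
    (hacm : ACM n φ ξ η) (e : OrthonormalBasis (Fin (2 * n + 1)) ℝ V) :
    (∀ F, InF φ ξ η F → (L1 ξ η F = -F ↔ F = F3 ξ η F)) ∧
    (∀ F, InF φ ξ η F → (L1 ξ η F = F ↔ ∀ z, F ξ ξ z = 0)) ∧
    (∀ F, InF φ ξ η F →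
      ∃! p : (V → V → V → ℝ) × (V → V → V → ℝ),
        MemF1sub φ ξ η p.1 ∧ (InF φ ξ η p.2 ∧ ∀ z, p.2 ξ ξ z = 0) ∧
          F = p.1 + p.2) ∧
    (∀ F G, MemF1sub φ ξ η F → InF φ ξ η G → (∀ z, G ξ ξ z = 0) →
      innerF e F G = 0) ∧
    (∀ A : V ≃ₗᵢ[ℝ] V, (∀ x, A (φ x) = φ (A x)) → A ξ = ξ →
      (∀ F, MemF1sub φ ξ η F → MemF1sub φ ξ η (actA A F)) ∧
      (∀ F, InF φ ξ η F → (∀ z, F ξ ξ z = 0) →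
        InF φ ξ η (actA A F) ∧ ∀ z, actA A F ξ ξ z = 0)) := by
  have hηξ := aux_eta_xi hacm
  refine ⟨?_, ?_, ?_, ?_, ?_⟩
  · intro F hF
    constructor
    · intro h
      funext x y z
      have h' := congrFun (congrFun (congrFun h x) y) z
      simp only [L1, Pi.neg_apply] at h'
      linarith
    · intro h
      funext x y z
      have h' := congrFun (congrFun (congrFun h x) y) z
      simp only [L1, Pi.neg_apply]
      linarith
  · intro F hF
    have hξξξ : F ξ ξ ξ = 0 := aux_diag hF ξ ξ
    constructor
    · intro h z
      have h' := congrFun (congrFun (congrFun h ξ) ξ) z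
      simp only [L1, F3, hηξ, hξξξ, one_mul, mul_zero, sub_zero] at h'
      linarith
    · intro h
      funext x y z
      simp only [L1, F3, h]
      ring
  · intro F hF
    have hξξξ : F ξ ξ ξ = 0 := aux_diag hF ξ ξ
    refine ⟨(F3 ξ η F, fun x y z => F x y z - F3 ξ η F x y z),
      ⟨⟨aux_InF_F3 hacm hF, (aux_F3_idem hacm hF).symm⟩,
        ⟨aux_InF_sub hF (aux_InF_F3 hacm hF), fun z => by
          simp only [F3, hηξ, hξξξ]; ring⟩, ?_⟩, ?_⟩
    · funext x y z
      simp only [Pi.add_apply]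
      ring
    · rintro ⟨q1, q2⟩ ⟨⟨hq1F, hq1eq⟩, ⟨hq2F, hq2ξ⟩, hsum⟩
      dsimp only at hq1F hq1eq hq2F hq2ξ hsum
      have hq1ξ : ∀ z, q1 ξ ξ z = F ξ ξ z := by
        intro z
        have h' := congrFun (congrFun (congrFun hsum ξ) ξ) z
        simp only [Pi.add_apply] at h'
        rw [h', hq2ξ z, add_zero]
      have hq1 : q1 = F3 ξ η F := by
        funext x y z
        have h' := congrFun (congrFun (congrFun hq1eq x) y) z
        rw [h']
        simp only [F3, hq1ξ]
      simp only [Prod.mk.injEq]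
      refine ⟨hq1, ?_⟩
      funext x y z
      have h' := congrFun (congrFun (congrFun hsum x) y) z
      simp only [Pi.add_apply] at h'
      rw [← hq1]
      linarith
  · intro F G hFm hG hGξ
    obtain ⟨hFin, hF3⟩ := hFm
    have hFeq : ∀ x y z, F x y z = η x * η y * F ξ ξ z - η x * η z * F ξ ξ y := by
      intro x y z
      have h' := congrFun (congrFun (congrFun hF3 x) y) z
      rw [h']; rfl
    have hGanti := hG.2.1
    have e1 : innerF e F G = ∑ i, η (e i) *
        (∑ j, ∑ k, (η (e j) * F ξ ξ (e k) - η (e k) * F ξ ξ (e j)) * G (e i) (e j) (e k)) := by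
      unfold innerF
      refine Finset.sum_congr rfl fun i _ => ?_
      simp only [Finset.mul_sum]
      refine Finset.sum_congr rfl fun j _ => Finset.sum_congr rfl fun k _ => ?_
      rw [hFeq]; ring
    have e2 : (∑ i, η (e i) *
        (∑ j, ∑ k, (η (e j) * F ξ ξ (e k) - η (e k) * F ξ ξ (e j)) * G (e i) (e j) (e k)))
        = ∑ j, ∑ k, (η (e j) * F ξ ξ (e k) - η (e k) * F ξ ξ (e j)) * G ξ (e j) (e k) :=
      aux_sum_eta hacm e (aux_isLinearMap_sum _ _ fun j _ =>
        aux_isLinearMap_sum _ _ fun k _ => aux_const_mul (hG.1.1 (e j) (e k)) _)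
    have e3 : (∑ j, ∑ k, (η (e j) * F ξ ξ (e k) - η (e k) * F ξ ξ (e j)) * G ξ (e j) (e k))
        = (∑ j, η (e j) * (∑ k, F ξ ξ (e k) * G ξ (e j) (e k)))
          - (∑ j, F ξ ξ (e j) * (∑ k, η (e k) * G ξ (e j) (e k))) := by
      rw [← Finset.sum_sub_distrib]
      refine Finset.sum_congr rfl fun j _ => ?_
      simp only [Finset.mul_sum]
      rw [← Finset.sum_sub_distrib]
      refine Finset.sum_congr rfl fun k _ => ?_
      ring
    have e4 : (∑ j, η (e j) * (∑ k, F ξ ξ (e k) * G ξ (e j) (e k)))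
        = ∑ k, F ξ ξ (e k) * G ξ ξ (e k) :=
      aux_sum_eta hacm e (aux_isLinearMap_sum _ _ fun k _ =>
        aux_const_mul (hG.1.2.1 ξ (e k)) _)
    have e5 : (∑ j, F ξ ξ (e j) * (∑ k, η (e k) * G ξ (e j) (e k))) = 0 := by
      refine Finset.sum_eq_zero fun j _ => ?_
      have h' : (∑ k, η (e k) * G ξ (e j) (e k)) = G ξ (e j) ξ :=
        aux_sum_eta hacm e (hG.1.2.2 ξ (e j))
      rw [h', hGanti ξ (e j) ξ, hGξ (e j)]
      ring
    rw [e1, e2, e3, e4, e5]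
    simp [hGξ]
  · intro A hAφ hAξ
    constructor
    · rintro F ⟨hFin, hF3⟩
      refine ⟨aux_actA_InF hacm A hAφ hAξ hFin, ?_⟩
      have hFeq : ∀ x y z, F x y z = η x * η y * F ξ ξ z - η x * η z * F ξ ξ y := by
        intro x y z
        have h' := congrFun (congrFun (congrFun hF3 x) y) z
        rw [h']; rfl
      funext x y z
      show F (A.symm x) (A.symm y) (A.symm z) = F3 ξ η (actA A F) x y z
      rw [hFeq]
      simp only [F3, actA, aux_Asymm_xi A hAξ, aux_eta_Asymm hacm A hAξ]
    · intro F hFin hFξ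
      refine ⟨aux_actA_InF hacm A hAφ hAξ hFin, fun z => ?_⟩
      simp only [actA, aux_Asymm_xi A hAξ]
      exact hFξ _
end
end
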